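/- arXiv:0907.2543 — 4 statements merged into one kernel-verified Lean document; each statement's English description precedes it below -/
import Mathlib

section
/- The degenerate cyclotomic Hecke algebra of level two H_d^{p,q} := H_d / ⟨(x_1-p)(x_1-q)⟩, where H_d is the degenerate affine Hecke algebra over a field F of characteristic zero, has dimension 2^d · d! as an F-vector space. -/
/-- The degenerate affine Hecke algebra `H_d` over a field `F`: an `F`-algebra which,
as a vector space, is `F[x_1,…,x_d] ⊗ F[S_d]` (encoded by the PBW-type basis `pbw`
of monomials `x^σ · w`), in which the polynomial generators commute and the
relations `s_r x_t = x_t s_r` (for `t ≠ r, r+1`) and `s_r x_{r+1} = x_r s_r + 1` hold. -/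
structure DegAffineHecke (F : Type*) [Field F] (d : ℕ) where
  carrier : Type*
  [ring : Ring carrier]
  [alg : Algebra F carrier]
  x : Fin d → carrier
  s : Equiv.Perm (Fin d) →* carrier
  x_comm : ∀ i j, x i * x j = x j * x i
  s_x_comm : ∀ (r t : ℕ) (hr : r + 1 < d) (ht : t < d), t ≠ r → t ≠ r + 1 →
    s (Equiv.swap ⟨r, Nat.lt_of_succ_lt hr⟩ ⟨r + 1, hr⟩) * x ⟨t, ht⟩
      = x ⟨t, ht⟩ * s (Equiv.swap ⟨r, Nat.lt_of_succ_lt hr⟩ ⟨r + 1, hr⟩)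
  s_x_rel : ∀ (r : ℕ) (hr : r + 1 < d),
    s (Equiv.swap ⟨r, Nat.lt_of_succ_lt hr⟩ ⟨r + 1, hr⟩) * x ⟨r + 1, hr⟩
      = x ⟨r, Nat.lt_of_succ_lt hr⟩ * s (Equiv.swap ⟨r, Nat.lt_of_succ_lt hr⟩ ⟨r + 1, hr⟩) + 1
  pbw : Module.Basis ((Fin d → ℕ) × Equiv.Perm (Fin d)) F carrier
  pbw_eq : ∀ σ w, pbw (σ, w) = (List.ofFn fun i => x i ^ σ i).prod * s w

attribute [instance] DegAffineHecke.ring DegAffineHecke.alg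

/-!
Index from `0` and put `ζ₀ = (x₀ - p)(x₀ - q)`, `ζⱼ₊₁ = sⱼ ζⱼ sⱼ` with `sⱼ = (j, j+1)`. Then
`s_w ζⱼ = ζ_{w j} s_w`, and every commutator `[ζⱼ, x_m]` is a combination of the `ζₗ s_w`; hence
the two-sided ideal generated by `ζ₀` is just the span `J` of the elements `x^σ ζₗ s_w`. Such an
element equals the PBW monomial `x^(σ + 2eₗ) s_w` modulo lower `x`-degree. For `k < l`, the S-pair
`xₖ² ζₗ - xₗ² ζₖ` lies in the part of `J` of degree at most one, which lets us restrict to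
"reduced" `σ`, with `σₖ ≤ 1` for `k < l`. The leading monomials of the reduced generators are
distinct and are exactly the PBW monomials with some exponent `≥ 2`, so by triangularity `J` is a
complement of the span of the `2^d · d!` squarefree PBW monomials `x^ε s_w`, `ε ∈ {0,1}^d`.
-/

open Set Submodule Function Equiv

theorem List.prod_ofFn_mul_of_commute {M : Type*} [Monoid M] {n : ℕ} (f g : Fin n → M)
    (h : ∀ i j, Commute (f i) (g j)) :
    (List.ofFn (f * g)).prod = (List.ofFn f).prod * (List.ofFn g).prod := by
  induction n with
  | zero => simp
  | succ n ih =>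
    have hg : Commute (g 0) (List.ofFn fun i : Fin n => f i.succ).prod :=
      Commute.list_prod_right _ _ fun y hy => by
        obtain ⟨i, rfl⟩ := List.mem_ofFn.mp hy
        exact (h i.succ 0).symm
    simp only [List.ofFn_succ, List.prod_cons, Pi.mul_apply]
    rw [show (fun i : Fin n => f i.succ * g i.succ) = (fun i => f i.succ) * fun i => g i.succ
      from rfl, ih _ _ fun i j => h _ _, mul_assoc, mul_assoc, ← mul_assoc (g 0), hg.eq,
      mul_assoc]

theorem List.prod_ofFn_eq_of_forall_ne {M : Type*} [Monoid M] {n : ℕ} (f : Fin n → M)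
    (i : Fin n) (h : ∀ j ≠ i, f j = 1) : (List.ofFn f).prod = f i := by
  induction n with
  | zero => exact i.elim0
  | succ n ih =>
    rw [List.ofFn_succ, List.prod_cons]
    cases i using Fin.cases with
    | zero =>
      rw [List.prod_eq_one, mul_one]
      simpa [List.mem_ofFn] using fun j => h j.succ (Fin.succ_ne_zero j)
    | succ i =>
      rw [h 0 (Fin.succ_ne_zero i).symm, one_mul]
      exact ih _ i fun j hj => h j.succ (by simpa using hj)

theorem Submodule.apply_mem_of_mem_span_range {R M N ι : Type*} [Semiring R] [AddCommMonoid M]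
    [Module R M] [AddCommMonoid N] [Module R N] (f : M →ₗ[R] N) {g : ι → M}
    {K : Submodule R N} (h : ∀ i, f (g i) ∈ K) {v : M} (hv : v ∈ span R (range g)) : f v ∈ K :=
  span_le (p := K.comap f) |>.mpr (range_subset_iff.mpr h) hv

theorem Submodule.apply_mem_of_mem_span_image {R M N ι : Type*} [Semiring R] [AddCommMonoid M]
    [Module R M] [AddCommMonoid N] [Module R N] (f : M →ₗ[R] N) {g : ι → M} {s : Set ι}
    {K : Submodule R N} (h : ∀ i ∈ s, f (g i) ∈ K) {v : M} (hv : v ∈ span R (g '' s)) :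
    f v ∈ K :=
  span_le (p := K.comap f) |>.mpr (image_subset_iff.mpr h) hv

theorem Equiv.swap_mul_swap_of_ne {α : Type*} [DecidableEq α] {a b c e : α} (hac : a ≠ c)
    (hae : a ≠ e) (hbc : b ≠ c) (hbe : b ≠ e) : swap a b * swap c e = swap c e * swap a b := by
  rw [mul_swap_eq_swap_mul, swap_apply_of_ne_of_ne hac.symm hbc.symm,
    swap_apply_of_ne_of_ne hae.symm hbe.symm]

theorem Equiv.swap_braid {α : Type*} [DecidableEq α] {a b c : α} (hab : a ≠ b) (hbc : b ≠ c)
    (hac : a ≠ c) : swap a b * swap b c * swap a b = swap b c * swap a b * swap b c := by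
  rw [swap_mul_swap_mul_swap hab hac, swap_comm a b, swap_comm b c,
    swap_mul_swap_mul_swap hbc.symm hac.symm, swap_comm]

theorem Equiv.Perm.induction_on_swap_castSucc_succ {n : ℕ} {P : Perm (Fin (n + 1)) → Prop}
    (one : P 1) (mul : ∀ u v, P u → P v → P (u * v))
    (adjacent : ∀ i : Fin n, P (swap i.castSucc i.succ)) (u : Perm (Fin (n + 1))) : P u := by
  have hu : u ∈ Submonoid.closure (range fun i : Fin n => swap i.castSucc i.succ) := by
    rw [mclosure_swap_castSucc_succ]; trivial
  induction hu using Submonoid.closure_induction with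
  | mem _ h => obtain ⟨i, rfl⟩ := h; exact adjacent i
  | one => exact one
  | mul u v _ _ hu hv => exact mul u v hu hv

theorem Finset.sum_add_pi_single {ι M : Type*} [Fintype ι] [DecidableEq ι] [AddCommMonoid M]
    (σ : ι → M) (j : ι) (c : M) : ∑ i, (σ + Pi.single j c : ι → M) i = ∑ i, σ i + c := by
  simp [Finset.sum_add_distrib]

namespace Module.Basis

variable {R M κ ι : Type*} [Ring R] [AddCommGroup M] [Module R M] (b : Basis κ R M)
  (deg : κ → ℕ) {g : ι → M} {lead : ι → κ}

theorem repr_apply_lead_of_triangular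
    (hg : ∀ i, g i - b (lead i) ∈ span R (b '' {k | deg k < deg (lead i)}))
    {i j : ι} (hij : deg (lead i) ≤ deg (lead j)) :
    b.repr (g i) (lead j) = Finsupp.single (lead i) 1 (lead j) := by
  have hlow : b.repr (g i - b (lead i)) (lead j) = 0 :=
    Finsupp.notMem_support_iff.mp fun h => (b.mem_span_image.mp (hg i) h).not_ge hij
  rwa [map_sub, Finsupp.sub_apply, sub_eq_zero, b.repr_self] at hlow

theorem disjoint_span_of_triangular
    (hg : ∀ i, g i - b (lead i) ∈ span R (b '' {k | deg k < deg (lead i)}))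
    (hlead : Function.Injective lead) {K : Set κ} (hK : ∀ i, lead i ∉ K) :
    Disjoint (span R (b '' K)) (span R (range g)) := by
  rw [Submodule.disjoint_def]
  intro v hvK hvg
  obtain ⟨c, rfl⟩ := Finsupp.mem_span_range_iff_exists_finsupp.mp hvg
  suffices c = 0 by simp [this]
  by_contra hc
  obtain ⟨i, hi, hmax⟩ :=
    c.support.exists_max_image (deg ∘ lead) (Finsupp.support_nonempty_iff.mpr hc)
  have hcoord : b.repr (c.sum fun j a => a • g j) (lead i) = c i := by
    rw [Finsupp.sum, map_sum, Finsupp.finsetSum_apply, Finset.sum_eq_single i]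
    · simp [b.repr_apply_lead_of_triangular deg hg le_rfl]
    · intro j hj hji
      simp [b.repr_apply_lead_of_triangular deg hg (hmax j hj),
        Finsupp.single_eq_of_ne' (hlead.ne hji)]
    · exact fun h => absurd hi h
  have hzero : b.repr (c.sum fun j a => a • g j) (lead i) = 0 :=
    Finsupp.notMem_support_iff.mp fun h => hK i (b.mem_span_image.mp hvK h)
  exact Finsupp.mem_support_iff.mp hi (hcoord ▸ hzero)

theorem codisjoint_span_of_triangular
    (hg : ∀ i, g i - b (lead i) ∈ span R (b '' {k | deg k < deg (lead i)}))
    {K : Set κ} (hK : ∀ k ∉ K, k ∈ range lead) :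
    Codisjoint (span R (b '' K)) (span R (range g)) := by
  rw [codisjoint_iff, eq_top_iff, ← b.span_eq, span_le, range_subset_iff]
  intro k
  induction hk : deg k using Nat.strong_induction_on generalizing k with
  | _ m ih =>
  by_cases hkK : k ∈ K
  · exact mem_sup_left (subset_span (mem_image_of_mem b hkK))
  obtain ⟨i, rfl⟩ := hK k hkK
  have hlow : span R (b '' {k | deg k < deg (lead i)}) ≤ span R (b '' K) ⊔ span R (range g) :=
    span_le.mpr (by rintro _ ⟨k', hk', rfl⟩; exact ih _ (hk ▸ hk') k' rfl)
  simpa using sub_mem (mem_sup_right (subset_span (mem_range_self i))) (hlow (hg i))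

theorem isCompl_span_of_triangular
    (hg : ∀ i, g i - b (lead i) ∈ span R (b '' {k | deg k < deg (lead i)}))
    (hlead : Function.Injective lead) {K : Set κ} (hK : K = (range lead)ᶜ) :
    IsCompl (span R (b '' K)) (span R (range g)) := by
  subst hK
  exact ⟨b.disjoint_span_of_triangular deg hg hlead fun i h => h (mem_range_self i),
    b.codisjoint_span_of_triangular deg hg fun k hk => not_not.mp hk⟩

end Module.Basis

theorem RingQuot.ker_mkRingHom {R : Type*} [Ring R] (r : R → R → Prop) :
    TwoSidedIdeal.ker (mkRingHom r) = TwoSidedIdeal.span {x | ∃ a b, r a b ∧ a - b = x} := by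
  set I := TwoSidedIdeal.span {x | ∃ a b, r a b ∧ a - b = x}
  refine le_antisymm (fun x hx => ?_) (TwoSidedIdeal.span_le.mpr ?_)
  · have hr : ∀ ⦃a b⦄, r a b → I.ringCon.mk' a = I.ringCon.mk' b := fun a b h =>
      Quotient.sound' ((I.rel_iff a b).mpr (TwoSidedIdeal.subset_span ⟨a, b, h, rfl⟩))
    have := congrArg (lift ⟨I.ringCon.mk', hr⟩) ((TwoSidedIdeal.mem_ker _).mp hx)
    rw [lift_mkRingHom_apply, map_zero] at this
    rwa [← TwoSidedIdeal.ker_ringCon_mk' I, TwoSidedIdeal.mem_ker]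
  · rintro _ ⟨a, b, h, rfl⟩
    rw [SetLike.mem_coe, TwoSidedIdeal.mem_ker, map_sub, sub_eq_zero]
    exact mkRingHom_rel h

namespace DegAffineHecke

variable {F : Type*} [Field F]

section Monomial

variable {d : ℕ} (H : DegAffineHecke F d)

def monomial (σ : Fin d → ℕ) : H.carrier := (List.ofFn fun i => H.x i ^ σ i).prod

theorem pbw_apply (σ : Fin d → ℕ) (w : Perm (Fin d)) : H.pbw (σ, w) = H.monomial σ * H.s w :=
  H.pbw_eq σ w

theorem monomial_add (σ τ : Fin d → ℕ) :
    H.monomial (σ + τ) = H.monomial σ * H.monomial τ := by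
  rw [monomial, monomial, monomial, ← List.prod_ofFn_mul_of_commute]
  · simp only [Pi.add_apply, pow_add]; rfl
  · exact fun i j => (Commute.pow_pow (H.x_comm i j) _ _)

theorem monomial_zero : H.monomial 0 = 1 :=
  List.prod_eq_one (by simp)

theorem monomial_single (i : Fin d) (k : ℕ) : H.monomial (Pi.single i k) = H.x i ^ k := by
  rw [monomial, List.prod_ofFn_eq_of_forall_ne _ i fun j hj => by simp [hj], Pi.single_eq_same]

theorem monomial_mul_x (σ : Fin d → ℕ) (i : Fin d) :
    H.monomial σ * H.x i = H.monomial (σ + Pi.single i 1) := by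
  rw [monomial_add, monomial_single, pow_one]

theorem monomial_mul_x_sq (σ : Fin d → ℕ) (i : Fin d) :
    H.monomial σ * H.x i ^ 2 = H.monomial (σ + Pi.single i 2) := by
  rw [monomial_add, monomial_single]

theorem mem_of_forall_pbw {K : Submodule F H.carrier}
    (h : ∀ σ w, H.monomial σ * H.s w ∈ K) (a : H.carrier) : a ∈ K := by
  have : span F (range H.pbw) ≤ K :=
    span_le.mpr (range_subset_iff.mpr fun κ => (H.pbw_apply κ.1 κ.2).symm ▸ h κ.1 κ.2)
  exact this (H.pbw.span_eq ▸ mem_top)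

end Monomial

section Relations

variable {n : ℕ} (H : DegAffineHecke F (n + 1))

def T (i : Fin n) : H.carrier := H.s (swap i.castSucc i.succ)

theorem T_mul_T (i : Fin n) : H.T i * H.T i = 1 := by
  rw [T, ← map_mul, swap_mul_self, map_one]

theorem T_mul_x_of_ne {i : Fin n} {m : Fin (n + 1)} (h₁ : m ≠ i.castSucc) (h₂ : m ≠ i.succ) :
    H.T i * H.x m = H.x m * H.T i :=
  H.s_x_comm i m i.succ.isLt m.isLt (Fin.val_ne_of_ne h₁) (Fin.val_ne_of_ne h₂)

theorem T_mul_x_succ (i : Fin n) : H.T i * H.x i.succ = H.x i.castSucc * H.T i + 1 :=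
  H.s_x_rel i i.succ.isLt

theorem T_mul_x_castSucc (i : Fin n) : H.T i * H.x i.castSucc = H.x i.succ * H.T i - 1 := by
  linear_combination (norm := noncomm_ring) -(H.T i * H.T_mul_x_succ i * H.T i)
    + H.T_mul_T i * (H.x i.succ * H.T i) - (H.T i * H.x i.castSucc) * H.T_mul_T i - H.T_mul_T i


def sSpan : Submodule F H.carrier := span F (range H.s)

theorem s_mem_sSpan (w : Perm (Fin (n + 1))) : H.s w ∈ H.sSpan := subset_span (mem_range_self w)

theorem s_mul_mem_sSpan (u : Perm (Fin (n + 1))) {v : H.carrier} (hv : v ∈ H.sSpan) :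
    H.s u * v ∈ H.sSpan :=
  apply_mem_of_mem_span_range (LinearMap.mulLeft F (H.s u))
    (fun w => by simpa only [LinearMap.mulLeft_apply, ← map_mul] using H.s_mem_sSpan _) hv

theorem mul_s_mem_sSpan (u : Perm (Fin (n + 1))) {v : H.carrier} (hv : v ∈ H.sSpan) :
    v * H.s u ∈ H.sSpan :=
  apply_mem_of_mem_span_range (LinearMap.mulRight F (H.s u))
    (fun w => by simpa only [LinearMap.mulRight_apply, ← map_mul] using H.s_mem_sSpan _) hv

theorem T_mul_x_sub_mem_sSpan (i : Fin n) (m : Fin (n + 1)) :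
    H.T i * H.x m - H.x (swap i.castSucc i.succ m) * H.T i ∈ H.sSpan := by
  rcases eq_or_ne m i.castSucc with rfl | h₁
  · rw [swap_apply_left, T_mul_x_castSucc, sub_sub_cancel_left]
    exact neg_mem (by simpa using H.s_mem_sSpan 1)
  rcases eq_or_ne m i.succ with rfl | h₂
  · rw [swap_apply_right, T_mul_x_succ, add_sub_cancel_left]
    simpa using H.s_mem_sSpan 1
  · rw [swap_apply_of_ne_of_ne h₁ h₂, T_mul_x_of_ne H h₁ h₂, sub_self]
    exact zero_mem _

theorem s_mul_x_sub_mem_sSpan (u : Perm (Fin (n + 1))) (m : Fin (n + 1)) :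
    H.s u * H.x m - H.x (u m) * H.s u ∈ H.sSpan := by
  induction u using Perm.induction_on_swap_castSucc_succ generalizing m with
  | one => simp
  | mul u v hu hv =>
    have key : H.s (u * v) * H.x m - H.x ((u * v) m) * H.s (u * v)
        = H.s u * (H.s v * H.x m - H.x (v m) * H.s v)
          + (H.s u * H.x (v m) - H.x (u (v m)) * H.s u) * H.s v := by
      rw [map_mul, Perm.mul_apply]; noncomm_ring
    rw [key]
    exact add_mem (H.s_mul_mem_sSpan u (hv m)) (H.mul_s_mem_sSpan v (hu (v m)))
  | adjacent i => exact H.T_mul_x_sub_mem_sSpan i m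

end Relations

section Zeta

variable {n : ℕ} (H : DegAffineHecke F (n + 1)) (p q : F)

theorem T_commute_T {i k : Fin n} (h : i.val + 1 < k.val) : Commute (H.T i) (H.T k) := by
  rw [Commute, SemiconjBy, T, T, ← map_mul, ← map_mul, swap_mul_swap_of_ne] <;>
    simp [Fin.ext_iff] <;> omega

def zeta : Fin (n + 1) → H.carrier :=
  Fin.induction ((H.x 0 - algebraMap F H.carrier p) * (H.x 0 - algebraMap F H.carrier q))
    fun i ζ => H.T i * ζ * H.T i

theorem zeta_zero :
    H.zeta p q 0 = (H.x 0 - algebraMap F H.carrier p) * (H.x 0 - algebraMap F H.carrier q) :=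
  rfl

theorem zeta_succ (i : Fin n) : H.zeta p q i.succ = H.T i * H.zeta p q i.castSucc * H.T i :=
  Fin.induction_succ _ _ i

theorem commute_zeta_zero {a : H.carrier} (h : Commute a (H.x 0)) :
    Commute a (H.zeta p q 0) :=
  (h.sub_right (Algebra.commute_algebraMap_right p a)).mul_right
    (h.sub_right (Algebra.commute_algebraMap_right q a))

theorem zeta_commute_x_of_lt {j m : Fin (n + 1)} (h : j < m) : Commute (H.zeta p q j) (H.x m) := by
  induction j using Fin.induction with
  | zero => exact (H.commute_zeta_zero p q (H.x_comm m 0)).symm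
  | succ k ih =>
    have hT : Commute (H.T k) (H.x m) :=
      H.T_mul_x_of_ne (by simp [Fin.ext_iff, Fin.lt_def] at h ⊢; omega) h.ne'
    rw [zeta_succ]
    exact (hT.mul_left (ih (lt_trans (by simp [Fin.lt_def]) h))).mul_left hT

theorem zeta_commute_T_of_lt {j : Fin (n + 1)} {i : Fin n} (h : j < i.castSucc) :
    Commute (H.zeta p q j) (H.T i) := by
  induction j using Fin.induction with
  | zero =>
    refine (H.commute_zeta_zero p q ?_).symm
    exact H.T_mul_x_of_ne h.ne (by simp [Fin.ext_iff])
  | succ k ih =>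
    have hT : Commute (H.T k) (H.T i) := H.T_commute_T (by simpa [Fin.lt_def] using h)
    rw [zeta_succ]
    exact (hT.mul_left (ih (lt_trans (by simp [Fin.lt_def]) h))).mul_left hT

theorem T_mul_zeta (i : Fin n) (j : Fin (n + 1)) :
    H.T i * H.zeta p q j = H.zeta p q (swap i.castSucc i.succ j) * H.T i := by
  induction j using Fin.induction with
  | zero =>
    by_cases hi : i.castSucc = 0
    · rw [← hi, swap_apply_left, zeta_succ, mul_assoc _ (H.T i), T_mul_T, mul_one, hi]
    · rw [swap_apply_of_ne_of_ne (Ne.symm hi) (Fin.succ_ne_zero i).symm]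
      exact (H.zeta_commute_T_of_lt p q (Fin.pos_iff_ne_zero.mpr hi)).eq.symm
  | succ k ih =>
    obtain h | h | h | h | h : i.val = k.val ∨ i.val = k.val + 1 ∨ k.val + 1 < i.val ∨
        i.val + 1 = k.val ∨ i.val + 1 < k.val := by omega
    · obtain rfl := Fin.ext h
      rw [swap_apply_right, zeta_succ, ← mul_assoc, ← mul_assoc, T_mul_T, one_mul]
    · have e : i.castSucc = k.succ := Fin.ext (by simpa using h)
      rw [← e, swap_apply_left, zeta_succ, mul_assoc _ (H.T i), T_mul_T, mul_one]
    · rw [swap_apply_of_ne_of_ne (by simp [Fin.ext_iff]; omega) (by simp [Fin.ext_iff]; omega)]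
      exact (H.zeta_commute_T_of_lt p q (by simpa [Fin.lt_def] using h)).eq.symm
    · have e : i.succ = k.castSucc := Fin.ext (by simpa using h)
      have hbraid : H.T i * H.T k * H.T i = H.T k * H.T i * H.T k := by
        simp only [T, ← map_mul]
        rw [e, swap_braid] <;> simp [Fin.ext_iff] <;> omega
      have hz : Commute (H.zeta p q i.castSucc) (H.T k) :=
        H.zeta_commute_T_of_lt p q (by rw [Fin.lt_def]; simp; omega)
      rw [swap_apply_of_ne_of_ne (by simp [Fin.ext_iff]; omega) (by simp [Fin.ext_iff]; omega),
        zeta_succ, ← e, zeta_succ]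
      linear_combination (norm := noncomm_ring)
        hbraid * (H.zeta p q i.castSucc * H.T i * H.T k)
        - (H.T k * H.T i) * hz.eq * (H.T i * H.T k)
        - (H.T k * H.T i * H.zeta p q i.castSucc) * hbraid
    · have hTk : Commute (H.T i) (H.T k) := H.T_commute_T h
      have hz : Commute (H.T i) (H.zeta p q k.castSucc) := by
        rw [Commute, SemiconjBy, ih, swap_apply_of_ne_of_ne] <;> simp [Fin.ext_iff] <;> omega
      rw [swap_apply_of_ne_of_ne (by simp [Fin.ext_iff]; omega) (by simp [Fin.ext_iff]; omega),
        zeta_succ]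
      exact ((hTk.mul_right hz).mul_right hTk).eq

theorem s_mul_zeta (u : Perm (Fin (n + 1))) (j : Fin (n + 1)) :
    H.s u * H.zeta p q j = H.zeta p q (u j) * H.s u := by
  induction u using Perm.induction_on_swap_castSucc_succ generalizing j with
  | one => simp
  | mul u v hu hv => rw [map_mul, mul_assoc, hv, ← mul_assoc, hu, mul_assoc, Perm.mul_apply]
  | adjacent i => exact H.T_mul_zeta p q i j

end Zeta

section DegreeOne

variable {n : ℕ} (H : DegAffineHecke F (n + 1)) (p q : F)

def xsSpan : Submodule F H.carrier :=
  span F (range (Sum.elim H.s fun mw : Fin (n + 1) × Perm (Fin (n + 1)) => H.x mw.1 * H.s mw.2))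

theorem s_mem_xsSpan (w : Perm (Fin (n + 1))) : H.s w ∈ H.xsSpan :=
  subset_span (mem_range_self (Sum.inl w))

theorem x_mul_s_mem_xsSpan (m : Fin (n + 1)) (w : Perm (Fin (n + 1))) :
    H.x m * H.s w ∈ H.xsSpan :=
  subset_span (mem_range_self (Sum.inr (m, w)))

theorem sSpan_le_xsSpan : H.sSpan ≤ H.xsSpan :=
  span_le.mpr (range_subset_iff.mpr H.s_mem_xsSpan)

theorem mul_s_mem_xsSpan (u : Perm (Fin (n + 1))) {v : H.carrier} (hv : v ∈ H.xsSpan) :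
    v * H.s u ∈ H.xsSpan := by
  refine apply_mem_of_mem_span_range (LinearMap.mulRight F (H.s u)) ?_ hv
  rintro (w | ⟨m, w⟩) <;> simp only [LinearMap.mulRight_apply, Sum.elim_inl, Sum.elim_inr,
    mul_assoc, ← map_mul]
  exacts [H.s_mem_xsSpan _, H.x_mul_s_mem_xsSpan _ _]

theorem s_mul_mem_xsSpan (u : Perm (Fin (n + 1))) {v : H.carrier} (hv : v ∈ H.xsSpan) :
    H.s u * v ∈ H.xsSpan := by
  refine apply_mem_of_mem_span_range (LinearMap.mulLeft F (H.s u)) ?_ hv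
  rintro (w | ⟨m, w⟩) <;> simp only [LinearMap.mulLeft_apply, Sum.elim_inl, Sum.elim_inr]
  · simpa only [← map_mul] using H.s_mem_xsSpan _
  · rw [show H.s u * (H.x m * H.s w) = H.x (u m) * H.s (u * w)
        + (H.s u * H.x m - H.x (u m) * H.s u) * H.s w by rw [map_mul]; noncomm_ring]
    exact add_mem (H.x_mul_s_mem_xsSpan _ _)
      (H.sSpan_le_xsSpan (H.mul_s_mem_sSpan w (H.s_mul_x_sub_mem_sSpan u m)))

theorem zeta_sub_x_sq_mem_xsSpan (j : Fin (n + 1)) : H.zeta p q j - H.x j ^ 2 ∈ H.xsSpan := by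
  induction j using Fin.induction with
  | zero =>
    have key : H.zeta p q 0 - H.x 0 ^ 2 = -(p + q) • (H.x 0 * H.s 1) + (p * q) • H.s 1 := by
      simp only [zeta_zero, map_one, mul_one, Algebra.smul_def, map_neg, map_add, map_mul]
      linear_combination (norm := noncomm_ring) Algebra.commutes q (H.x 0)
    rw [key]
    exact add_mem (smul_mem _ _ (H.x_mul_s_mem_xsSpan _ _)) (smul_mem _ _ (H.s_mem_xsSpan _))
  | succ k ih =>
    have key : H.zeta p q k.succ - H.x k.succ ^ 2 =
        H.T k * (H.zeta p q k.castSucc - H.x k.castSucc ^ 2) * H.T k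
          - H.x k.succ * H.T k - H.x k.castSucc * H.T k := by
      rw [zeta_succ]
      linear_combination (norm := noncomm_ring)
        H.T_mul_x_castSucc k * (H.x k.castSucc * H.T k)
          + H.x k.succ * H.T_mul_x_castSucc k * H.T k + (H.x k.succ * H.x k.succ) * H.T_mul_T k
    rw [key]
    refine sub_mem (sub_mem ?_ (H.x_mul_s_mem_xsSpan _ _)) (H.x_mul_s_mem_xsSpan _ _)
    exact H.mul_s_mem_xsSpan _ (H.s_mul_mem_xsSpan _ ih)

end DegreeOne

section CyclotomicIdeal

variable {n : ℕ} (H : DegAffineHecke F (n + 1)) (p q : F)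

abbrev GenIndex (n : ℕ) := (Fin (n + 1) → ℕ) × Fin (n + 1) × Perm (Fin (n + 1))

def gen (γ : GenIndex n) : H.carrier := H.monomial γ.1 * H.zeta p q γ.2.1 * H.s γ.2.2

def cycIdeal : Submodule F H.carrier := span F (range (H.gen p q))

def cycIdealDegLE (k : ℕ) : Submodule F H.carrier :=
  span F (H.gen p q '' {γ | ∑ i, γ.1 i ≤ k})

theorem gen_mem_cycIdealDegLE {k : ℕ} {γ : GenIndex n} (h : ∑ i, γ.1 i ≤ k) :
    H.gen p q γ ∈ H.cycIdealDegLE p q k :=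
  subset_span (mem_image_of_mem _ h)

theorem cycIdealDegLE_mono : Monotone (H.cycIdealDegLE p q) :=
  fun _ _ hkl => span_mono (image_mono fun _ h => le_trans h hkl)

theorem cycIdealDegLE_le_cycIdeal (k : ℕ) : H.cycIdealDegLE p q k ≤ H.cycIdeal p q :=
  span_mono (image_subset_range _ _)

theorem zeta_mul_s_mem_cycIdealDegLE (l : Fin (n + 1)) (w : Perm (Fin (n + 1))) (k : ℕ) :
    H.zeta p q l * H.s w ∈ H.cycIdealDegLE p q k := by
  simpa [gen, monomial_zero] using H.gen_mem_cycIdealDegLE p q (γ := (0, l, w)) (by simp)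

theorem monomial_mul_mul_s_mem_cycIdealDegLE (σ : Fin (n + 1) → ℕ) (w : Perm (Fin (n + 1)))
    {k : ℕ} {v : H.carrier} (hv : v ∈ H.cycIdealDegLE p q k) :
    H.monomial σ * v * H.s w ∈ H.cycIdealDegLE p q (∑ i, σ i + k) := by
  refine apply_mem_of_mem_span_image
    ((LinearMap.mulRight F (H.s w)).comp (LinearMap.mulLeft F (H.monomial σ))) ?_ hv
  rintro ⟨τ, l, u⟩ hτ
  have e : H.monomial σ * H.gen p q (τ, l, u) * H.s w = H.gen p q (σ + τ, l, u * w) := by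
    simp only [gen, monomial_add, map_mul]; noncomm_ring
  simp only [LinearMap.coe_comp, comp_apply, LinearMap.mulLeft_apply, LinearMap.mulRight_apply, e]
  refine H.gen_mem_cycIdealDegLE p q ?_
  simp only [Pi.add_apply, Finset.sum_add_distrib]
  exact Nat.add_le_add_left hτ _

theorem mul_s_mem_cycIdealDegLE (u : Perm (Fin (n + 1))) {k : ℕ} {v : H.carrier}
    (hv : v ∈ H.cycIdealDegLE p q k) : v * H.s u ∈ H.cycIdealDegLE p q k := by
  simpa [monomial_zero] using H.monomial_mul_mul_s_mem_cycIdealDegLE p q 0 u hv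

theorem s_mul_mem_cycIdealDegLE_zero (u : Perm (Fin (n + 1))) {v : H.carrier}
    (hv : v ∈ H.cycIdealDegLE p q 0) : H.s u * v ∈ H.cycIdealDegLE p q 0 := by
  refine apply_mem_of_mem_span_image (LinearMap.mulLeft F (H.s u)) ?_ hv
  rintro ⟨σ, l, w⟩ hσ
  obtain rfl : σ = 0 := funext fun i => by
    simpa using Finset.sum_eq_zero_iff.mp (Nat.le_zero.mp hσ) i (Finset.mem_univ i)
  simp only [LinearMap.mulLeft_apply, gen, monomial_zero, one_mul, ← mul_assoc, s_mul_zeta]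
  simpa only [mul_assoc, ← map_mul] using H.zeta_mul_s_mem_cycIdealDegLE p q _ _ 0

theorem zeta_mul_x_sub_mem_cycIdealDegLE_zero (j m : Fin (n + 1)) :
    H.zeta p q j * H.x m - H.x m * H.zeta p q j ∈ H.cycIdealDegLE p q 0 := by
  induction j using Fin.induction generalizing m with
  | zero => rw [(H.commute_zeta_zero p q (H.x_comm m 0)).eq, sub_self]; exact zero_mem _
  | succ k ih =>
    set z := H.zeta p q k.castSucc
    have hTz : H.T k * z ∈ H.cycIdealDegLE p q 0 := by
      rw [T_mul_zeta]; exact H.zeta_mul_s_mem_cycIdealDegLE p q _ _ 0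
    have hzT : z * H.T k ∈ H.cycIdealDegLE p q 0 := H.zeta_mul_s_mem_cycIdealDegLE p q _ _ 0
    have hconj : ∀ v ∈ H.cycIdealDegLE p q 0, H.T k * v * H.T k ∈ H.cycIdealDegLE p q 0 :=
      fun v hv => H.mul_s_mem_cycIdealDegLE p q _ (H.s_mul_mem_cycIdealDegLE_zero p q _ hv)
    rw [zeta_succ]
    by_cases h₂ : m = k.succ
    · subst h₂
      have key : H.T k * z * H.T k * H.x k.succ - H.x k.succ * (H.T k * z * H.T k)
          = H.T k * (z * H.x k.castSucc - H.x k.castSucc * z) * H.T k + H.T k * z - z * H.T k := by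
        linear_combination (norm := noncomm_ring)
          (H.T k * z) * H.T_mul_x_succ k + H.T_mul_x_castSucc k * (z * H.T k)
      rw [key]
      exact sub_mem (add_mem (hconj _ (ih _)) hTz) hzT
    by_cases h₁ : m = k.castSucc
    · subst h₁
      have hx : z * H.x k.succ = H.x k.succ * z :=
        (H.zeta_commute_x_of_lt p q Fin.castSucc_lt_succ).eq
      have key : H.T k * z * H.T k * H.x k.castSucc - H.x k.castSucc * (H.T k * z * H.T k)
          = z * H.T k - H.T k * z := by
        linear_combination (norm := noncomm_ring)
          (H.T k * z) * H.T_mul_x_castSucc k + H.T k * hx * H.T k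
            + H.T_mul_x_succ k * (z * H.T k)
      rw [key]
      exact sub_mem hzT hTz
    · have hTx := H.T_mul_x_of_ne h₁ h₂
      have key : H.T k * z * H.T k * H.x m - H.x m * (H.T k * z * H.T k)
          = H.T k * (z * H.x m - H.x m * z) * H.T k := by
        linear_combination (norm := noncomm_ring) (H.T k * z) * hTx + hTx * (z * H.T k)
      rw [key]
      exact hconj _ (ih m)

end CyclotomicIdeal

section TwoSided

variable {n : ℕ} (H : DegAffineHecke F (n + 1)) (p q : F)

theorem gen_mem_cycIdeal (γ : GenIndex n) : H.gen p q γ ∈ H.cycIdeal p q :=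
  subset_span (mem_range_self γ)

theorem mul_zeta_mul_s_mem_cycIdeal (a : H.carrier) (l : Fin (n + 1)) (w : Perm (Fin (n + 1))) :
    a * (H.zeta p q l * H.s w) ∈ H.cycIdeal p q := by
  refine H.mem_of_forall_pbw
    (K := (H.cycIdeal p q).comap (LinearMap.mulRight F (H.zeta p q l * H.s w))) (fun τ u => ?_) a
  have e : H.monomial τ * H.s u * (H.zeta p q l * H.s w) = H.gen p q (τ, u l, u * w) := by
    rw [gen, map_mul, mul_assoc (H.monomial τ), ← mul_assoc (H.s u), s_mul_zeta]; noncomm_ring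
  simpa only [mem_comap, LinearMap.mulRight_apply, e] using H.gen_mem_cycIdeal p q _

theorem mul_mem_cycIdeal_left (a : H.carrier) {v : H.carrier} (hv : v ∈ H.cycIdeal p q) :
    a * v ∈ H.cycIdeal p q :=
  apply_mem_of_mem_span_range (LinearMap.mulLeft F a) (fun ⟨σ, l, w⟩ => by
    simpa only [LinearMap.mulLeft_apply, gen, mul_assoc] using
      H.mul_zeta_mul_s_mem_cycIdeal p q (a * H.monomial σ) l w) hv

theorem mul_s_mem_cycIdeal (u : Perm (Fin (n + 1))) {v : H.carrier} (hv : v ∈ H.cycIdeal p q) :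
    v * H.s u ∈ H.cycIdeal p q :=
  apply_mem_of_mem_span_range (LinearMap.mulRight F (H.s u)) (fun ⟨σ, l, w⟩ => by
    simpa only [LinearMap.mulRight_apply, gen, mul_assoc, map_mul] using
      H.gen_mem_cycIdeal p q (σ, l, w * u)) hv

theorem mul_x_mem_cycIdeal (m : Fin (n + 1)) {v : H.carrier} (hv : v ∈ H.cycIdeal p q) :
    v * H.x m ∈ H.cycIdeal p q := by
  refine apply_mem_of_mem_span_range (LinearMap.mulRight F (H.x m)) (fun ⟨σ, l, w⟩ => ?_) hv
  have key : H.gen p q (σ, l, w) * H.x m = H.gen p q (σ + Pi.single (w m) 1, l, w)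
      + H.monomial σ * (H.zeta p q l * H.x (w m) - H.x (w m) * H.zeta p q l) * H.s w
      + H.monomial σ * H.zeta p q l * (H.s w * H.x m - H.x (w m) * H.s w) := by
    simp only [gen, ← monomial_mul_x]; noncomm_ring
  rw [LinearMap.mulRight_apply, key]
  refine add_mem (add_mem (H.gen_mem_cycIdeal p q _) ?_) ?_
  · exact H.cycIdealDegLE_le_cycIdeal p q _ (H.monomial_mul_mul_s_mem_cycIdealDegLE p q σ w
      (H.zeta_mul_x_sub_mem_cycIdealDegLE_zero p q l (w m)))
  · exact apply_mem_of_mem_span_range (LinearMap.mulLeft F (H.monomial σ * H.zeta p q l))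
      (fun u => H.gen_mem_cycIdeal p q (σ, l, u)) (H.s_mul_x_sub_mem_sSpan w m)

theorem mul_mem_cycIdeal_right (a : H.carrier) {v : H.carrier} (hv : v ∈ H.cycIdeal p q) :
    v * a ∈ H.cycIdeal p q := by
  let S : Submonoid H.carrier :=
    { carrier := {b | ∀ u ∈ H.cycIdeal p q, u * b ∈ H.cycIdeal p q}
      one_mem' := fun u hu => by simpa using hu
      mul_mem' := fun hb hc u hu => by simpa only [← mul_assoc] using hc _ (hb u hu) }
  have hmonomial (σ : Fin (n + 1) → ℕ) : H.monomial σ ∈ S := by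
    refine S.list_prod_mem fun y hy => ?_
    obtain ⟨i, rfl⟩ := List.mem_ofFn.mp hy
    exact S.pow_mem (fun u hu => H.mul_x_mem_cycIdeal p q i hu) _
  exact H.mem_of_forall_pbw (K := (H.cycIdeal p q).comap (LinearMap.mulLeft F v))
    (fun σ w => S.mul_mem (hmonomial σ) (fun u hu => H.mul_s_mem_cycIdeal p q w hu) v hv) a

def cycTwoSidedIdeal : TwoSidedIdeal H.carrier :=
  .mk' (H.cycIdeal p q) (zero_mem _) add_mem neg_mem (H.mul_mem_cycIdeal_left p q _)
    (H.mul_mem_cycIdeal_right p q _)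

theorem zeta_mem_span_zeta_zero (l : Fin (n + 1)) :
    H.zeta p q l ∈ TwoSidedIdeal.span {H.zeta p q 0} := by
  induction l using Fin.induction with
  | zero => exact TwoSidedIdeal.subset_span rfl
  | succ k ih =>
    rw [zeta_succ]
    exact TwoSidedIdeal.mul_mem_right _ _ _ (TwoSidedIdeal.mul_mem_left _ _ _ ih)

theorem cycTwoSidedIdeal_eq_span : H.cycTwoSidedIdeal p q = TwoSidedIdeal.span {H.zeta p q 0} := by
  refine le_antisymm (fun v hv => ?_) (TwoSidedIdeal.span_le.mpr ?_)
  · replace hv : v ∈ H.cycIdeal p q := (TwoSidedIdeal.mem_mk' _ _ _ _ _ _ v).mp hv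
    induction hv using Submodule.span_induction with
    | mem _ h =>
      obtain ⟨⟨σ, l, w⟩, rfl⟩ := h
      exact TwoSidedIdeal.mul_mem_right _ _ _
        (TwoSidedIdeal.mul_mem_left _ _ _ (H.zeta_mem_span_zeta_zero p q l))
    | zero => exact zero_mem _
    | add _ _ _ _ hx hy => exact add_mem hx hy
    | smul c _ _ hx => rw [Algebra.smul_def]; exact TwoSidedIdeal.mul_mem_left _ _ _ hx
  · rintro _ rfl
    rw [SetLike.mem_coe, cycTwoSidedIdeal, TwoSidedIdeal.mem_mk']
    simpa using H.cycIdealDegLE_le_cycIdeal p q 0 (H.zeta_mul_s_mem_cycIdealDegLE p q 0 1 0)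

end TwoSided

section Reduction

variable {n : ℕ} (H : DegAffineHecke F (n + 1)) (p q : F)

theorem zeta_mul_mem_cycIdealDegLE_one (k : Fin (n + 1)) {v : H.carrier} (hv : v ∈ H.xsSpan) :
    H.zeta p q k * v ∈ H.cycIdealDegLE p q 1 := by
  refine apply_mem_of_mem_span_range (LinearMap.mulLeft F (H.zeta p q k)) ?_ hv
  rintro (w | ⟨m, w⟩) <;> simp only [LinearMap.mulLeft_apply, Sum.elim_inl, Sum.elim_inr]
  · exact H.zeta_mul_s_mem_cycIdealDegLE p q k w 1
  · have key : H.zeta p q k * (H.x m * H.s w) = H.gen p q (Pi.single m 1, k, w)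
        + (H.zeta p q k * H.x m - H.x m * H.zeta p q k) * H.s w := by
      simp only [gen, monomial_single, pow_one]; noncomm_ring
    rw [key]
    exact add_mem (H.gen_mem_cycIdealDegLE p q (by simp)) (H.mul_s_mem_cycIdealDegLE p q w
      (H.cycIdealDegLE_mono p q zero_le_one (H.zeta_mul_x_sub_mem_cycIdealDegLE_zero p q k m)))

theorem mul_zeta_mem_cycIdealDegLE_one (l : Fin (n + 1)) {v : H.carrier} (hv : v ∈ H.xsSpan) :
    v * H.zeta p q l ∈ H.cycIdealDegLE p q 1 := by
  refine apply_mem_of_mem_span_range (LinearMap.mulRight F (H.zeta p q l)) ?_ hv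
  rintro (w | ⟨m, w⟩) <;>
    simp only [LinearMap.mulRight_apply, Sum.elim_inl, Sum.elim_inr, mul_assoc, s_mul_zeta]
  · exact H.zeta_mul_s_mem_cycIdealDegLE p q _ w 1
  · simpa [gen, monomial_single, mul_assoc] using
      H.gen_mem_cycIdealDegLE p q (k := 1) (γ := (Pi.single m 1, w l, w)) (by simp)

theorem x_sq_mul_zeta_sub_mem_cycIdealDegLE_one {k l : Fin (n + 1)} (h : k < l) :
    H.x k ^ 2 * H.zeta p q l - H.x l ^ 2 * H.zeta p q k ∈ H.cycIdealDegLE p q 1 := by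
  have hc := ((H.zeta_commute_x_of_lt p q h).pow_right 2).eq
  have key : H.x k ^ 2 * H.zeta p q l - H.x l ^ 2 * H.zeta p q k
      = H.zeta p q k * (H.zeta p q l - H.x l ^ 2) - (H.zeta p q k - H.x k ^ 2) * H.zeta p q l := by
    linear_combination (norm := noncomm_ring) hc
  rw [key]
  exact sub_mem (H.zeta_mul_mem_cycIdealDegLE_one p q k (H.zeta_sub_x_sq_mem_xsSpan p q l))
    (H.mul_zeta_mem_cycIdealDegLE_one p q l (H.zeta_sub_x_sq_mem_xsSpan p q k))

def IsReduced (γ : GenIndex n) : Prop := ∀ k < γ.2.1, γ.1 k ≤ 1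

def reducedSpan : Submodule F H.carrier :=
  span F (range fun γ : {γ : GenIndex n // IsReduced γ} => H.gen p q γ.1)

theorem cycIdealDegLE_le_reducedSpan (k : ℕ) : H.cycIdealDegLE p q k ≤ H.reducedSpan p q := by
  induction k using Nat.strong_induction_on with
  | _ k ihk =>
  refine span_le.mpr ?_
  rintro _ ⟨⟨σ, l, w⟩, hσ, rfl⟩
  replace hσ : ∑ i, σ i ≤ k := hσ
  induction l using WellFoundedLT.induction generalizing σ with
  | _ l ihl =>
  by_cases hred : IsReduced (σ, l, w)
  · exact subset_span ⟨⟨_, hred⟩, rfl⟩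
  obtain ⟨j, hjl, hj⟩ : ∃ j < l, 1 < σ j := by simpa [IsReduced] using hred
  set σ' := σ - Pi.single j 2
  have hσ' : σ = σ' + Pi.single j 2 := by
    ext i; rcases eq_or_ne i j with rfl | hi <;> simp [σ', *]; omega
  have hsum : ∑ i, σ i = ∑ i, σ' i + 2 := by rw [hσ', Finset.sum_add_pi_single]
  have key : H.gen p q (σ, l, w) = H.gen p q (σ' + Pi.single l 2, j, w)
      + H.monomial σ' * (H.x j ^ 2 * H.zeta p q l - H.x l ^ 2 * H.zeta p q j) * H.s w := by
    rw [hσ']; simp only [gen, monomial_add, monomial_single]; noncomm_ring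
  rw [key]
  refine add_mem (ihl j hjl _ (by rw [Finset.sum_add_pi_single]; omega))
    (ihk (∑ i, σ' i + 1) (by omega) ?_)
  exact H.monomial_mul_mul_s_mem_cycIdealDegLE p q σ' w
    (H.x_sq_mul_zeta_sub_mem_cycIdealDegLE_one p q hjl)

theorem cycIdeal_eq_reducedSpan : H.cycIdeal p q = H.reducedSpan p q :=
  le_antisymm
    (span_le.mpr (range_subset_iff.mpr fun _ =>
      H.cycIdealDegLE_le_reducedSpan p q _ (H.gen_mem_cycIdealDegLE p q le_rfl)))
    (span_le.mpr (range_subset_iff.mpr fun γ => H.gen_mem_cycIdeal p q γ.1))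

end Reduction

section Complement

variable {n : ℕ} (H : DegAffineHecke F (n + 1)) (p q : F)

def lead (γ : GenIndex n) : (Fin (n + 1) → ℕ) × Perm (Fin (n + 1)) :=
  (γ.1 + Pi.single γ.2.1 2, γ.2.2)

theorem lead_injective : Injective fun γ : {γ : GenIndex n // IsReduced γ} => lead γ.1 := by
  rintro ⟨⟨σ, l, w⟩, hγ⟩ ⟨⟨σ', l', w'⟩, hγ'⟩ h
  obtain ⟨hσ, rfl⟩ := Prod.mk.inj h
  obtain rfl : l = l' := by
    by_contra hne
    rcases lt_or_gt_of_ne hne with hlt | hlt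
    · have h₁ : σ l + 2 = σ' l := by simpa [hne] using congrFun hσ l
      have h₂ : σ' l ≤ 1 := hγ' l hlt
      omega
    · have h₁ : σ l' = σ' l' + 2 := by simpa [Ne.symm hne] using congrFun hσ l'
      have h₂ : σ l' ≤ 1 := hγ l' hlt
      omega
  obtain rfl : σ = σ' := add_right_cancel hσ
  rfl

theorem range_lead :
    range (fun γ : {γ : GenIndex n // IsReduced γ} => lead γ.1) = {κ | ∃ i, 2 ≤ κ.1 i} := by
  ext ⟨τ, u⟩
  constructor
  · rintro ⟨γ, h⟩
    rw [← h]
    exact ⟨γ.1.2.1, by simp [lead]⟩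
  · rintro ⟨i, hi⟩
    obtain ⟨j, hj, hmin⟩ :=
      (Finset.univ.filter fun i => 2 ≤ τ i).exists_min_image id ⟨i, by simpa using hi⟩
    replace hj : 2 ≤ τ j := (Finset.mem_filter.mp hj).2
    refine ⟨⟨(τ - Pi.single j 2, j, u), fun k hk => ?_⟩, ?_⟩
    · have : τ k ≤ 1 := by
        by_contra h
        exact hk.not_ge (hmin k (by simp; omega))
      simpa [hk.ne] using this
    · simp only [lead, Prod.mk.injEq, and_true]
      ext k
      rcases eq_or_ne k j with rfl | hk <;> simp [*]

def squarefreeIndex (κ : (Fin (n + 1) → Fin 2) × Perm (Fin (n + 1))) :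
    (Fin (n + 1) → ℕ) × Perm (Fin (n + 1)) :=
  (fun i => κ.1 i, κ.2)

theorem squarefreeIndex_injective : Injective (squarefreeIndex (n := n)) := by
  rintro ⟨τ, u⟩ ⟨τ', u'⟩ h
  obtain ⟨hτ, rfl⟩ := Prod.mk.inj h
  exact Prod.ext (funext fun i => Fin.ext (congrFun hτ i)) rfl

theorem range_squarefreeIndex :
    range (squarefreeIndex (n := n)) = {κ | ∀ i, κ.1 i ≤ 1} := by
  ext ⟨τ, u⟩
  constructor
  · rintro ⟨⟨τ, u⟩, h⟩
    obtain ⟨rfl, rfl⟩ := Prod.mk.inj h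
    exact fun i => Nat.le_of_lt_succ (τ i).isLt
  · intro h
    exact ⟨(fun i => ⟨τ i, Nat.lt_succ_of_le (h i)⟩, u), rfl⟩

def squarefreeSpan : Submodule F H.carrier := span F (range (H.pbw ∘ squarefreeIndex))

theorem finrank_squarefreeSpan :
    Module.finrank F H.squarefreeSpan = 2 ^ (n + 1) * (n + 1).factorial := by
  rw [squarefreeSpan,
    finrank_span_eq_card (H.pbw.linearIndependent.comp _ squarefreeIndex_injective)]
  simp [Fintype.card_perm]

theorem gen_sub_pbw_lead_mem (γ : GenIndex n) :
    H.gen p q γ - H.pbw (lead γ) ∈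
      span F (H.pbw '' {κ | ∑ i, κ.1 i < ∑ i, (lead γ).1 i}) := by
  obtain ⟨σ, l, w⟩ := γ
  have key : H.gen p q (σ, l, w) - H.pbw (lead (σ, l, w))
      = H.monomial σ * (H.zeta p q l - H.x l ^ 2) * H.s w := by
    rw [lead, pbw_apply, gen, ← monomial_mul_x_sq]; noncomm_ring
  rw [key]
  refine apply_mem_of_mem_span_range
    ((LinearMap.mulRight F (H.s w)).comp (LinearMap.mulLeft F (H.monomial σ))) ?_
    (H.zeta_sub_x_sq_mem_xsSpan p q l)
  rintro (u | ⟨m, u⟩) <;> simp only [LinearMap.coe_comp, comp_apply, LinearMap.mulLeft_apply,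
    LinearMap.mulRight_apply, Sum.elim_inl, Sum.elim_inr]
  · rw [mul_assoc, ← map_mul, ← pbw_apply]
    exact subset_span (mem_image_of_mem _
      (show ∑ i, σ i < ∑ i, (σ + Pi.single l 2 : _ → ℕ) i by rw [Finset.sum_add_pi_single]; omega))
  · rw [← mul_assoc, monomial_mul_x, mul_assoc, ← map_mul, ← pbw_apply]
    exact subset_span (mem_image_of_mem _ (show ∑ i, (σ + Pi.single m 1 : _ → ℕ) i
      < ∑ i, (σ + Pi.single l 2 : _ → ℕ) i by simp only [Finset.sum_add_pi_single]; omega))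

theorem isCompl_squarefreeSpan_cycIdeal : IsCompl H.squarefreeSpan (H.cycIdeal p q) := by
  rw [cycIdeal_eq_reducedSpan, squarefreeSpan, range_comp]
  refine H.pbw.isCompl_span_of_triangular (fun κ => ∑ i, κ.1 i)
    (fun γ => H.gen_sub_pbw_lead_mem p q γ.1) lead_injective ?_
  rw [range_lead, range_squarefreeIndex]
  ext κ
  simp

end Complement

section Quotient

variable {n : ℕ} (H : DegAffineHecke F (n + 1)) (p q : F)

theorem ker_mkAlgHom :
    LinearMap.ker (RingQuot.mkAlgHom F fun a b : H.carrier => a = H.zeta p q 0 ∧ b = 0).toLinearMap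
      = H.cycIdeal p q := by
  ext v
  have hrel : {x | ∃ a b : H.carrier, (a = H.zeta p q 0 ∧ b = 0) ∧ a - b = x}
      = {H.zeta p q 0} := by
    ext; simp [eq_comm]
  rw [LinearMap.mem_ker, AlgHom.toLinearMap_apply, ← AlgHom.coe_toRingHom, RingQuot.mkAlgHom_coe,
    ← TwoSidedIdeal.mem_ker, RingQuot.ker_mkRingHom, hrel, ← cycTwoSidedIdeal_eq_span,
    cycTwoSidedIdeal, TwoSidedIdeal.mem_mk']
  rfl

theorem finrank_ringQuot_zeta :
    Module.finrank F (RingQuot fun a b : H.carrier => a = H.zeta p q 0 ∧ b = 0)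
      = 2 ^ (n + 1) * (n + 1).factorial := by
  rw [← (LinearMap.quotKerEquivOfSurjective (RingQuot.mkAlgHom F _).toLinearMap
      (RingQuot.mkAlgHom_surjective F _)).finrank_eq,
    ker_mkAlgHom,
    (quotientEquivOfIsCompl _ _ (H.isCompl_squarefreeSpan_cycIdeal p q).symm).finrank_eq,
    finrank_squarefreeSpan]

end Quotient

end DegAffineHecke

theorem dim_cyclotomic_hecke_level_two_general (F : Type*) [Field F]
    (d : ℕ) (hd : 0 < d) (p q : ℤ) (H : DegAffineHecke F d) :
    Module.finrank F (RingQuot (fun a b : H.carrier =>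
        a = (H.x ⟨0, hd⟩ - (p : H.carrier)) * (H.x ⟨0, hd⟩ - (q : H.carrier)) ∧ b = 0))
      = 2 ^ d * Nat.factorial d := by
  obtain ⟨n, rfl⟩ := Nat.exists_eq_add_one_of_ne_zero hd.ne'
  have hzeta : (H.x ⟨0, hd⟩ - (p : H.carrier)) * (H.x ⟨0, hd⟩ - (q : H.carrier))
      = H.zeta (p : F) (q : F) 0 := by
    simp only [DegAffineHecke.zeta_zero, map_intCast]; rfl
  rw [hzeta]
  exact H.finrank_ringQuot_zeta _ _

/-- The degenerate cyclotomic Hecke algebra of level two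
`H_d^{p,q} = H_d / ⟨(x_1 - p)(x_1 - q)⟩` has dimension `2^d · d!` over `F`. -/
theorem dim_cyclotomic_hecke_level_two (F : Type*) [Field F] [CharZero F]
    (d : ℕ) (hd : 0 < d) (p q : ℤ) (hpq : p ≤ q) (H : DegAffineHecke F d) :
    Module.finrank F (RingQuot (fun a b : H.carrier =>
        a = (H.x ⟨0, hd⟩ - (p : H.carrier)) * (H.x ⟨0, hd⟩ - (q : H.carrier)) ∧ b = 0))
      = 2 ^ d * Nat.factorial d :=
  dim_cyclotomic_hecke_level_two_general F d hd p q H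
end

section
/- The element (x_1 - p)(x_1 - q) of the degenerate affine Hecke algebra H_d acts as zero on the module V(λ_{p,q}) ⊗ V^{⊗d}, where V is the natural gl(m|n)-module; in particular the action of H_d factors through the level-two cyclotomic quotient H_d^{p,q}. -/
/-- Parity: `bar r = 0` for `r < m` and `1` otherwise (0-based indexing). -/
def bar (m : ℕ) (i : ℕ) : ℕ := if i < m then 0 else 1

/-- The universal enveloping algebra `U(gl(m|n,F))`, encoded as an `F`-algebra `U`
generated by matrix units `e i j` satisfying the super-commutation relations, with the
PBW basis of ordered monomials in the `e i j` (odd generators appearing with exponent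
at most one). -/
structure GLSuperUEA (F : Type*) [Field F] (m n : ℕ) where
  U : Type*
  [ringU : Ring U]
  [algU : Algebra F U]
  e : Fin (m + n) → Fin (m + n) → U
  supercomm : ∀ i j k l : Fin (m + n),
    e i j * e k l
        - ((-1 : F) ^ ((bar m i + bar m j) * (bar m k + bar m l))) • (e k l * e i j)
      = (if j = k then e i l else 0)
        - ((-1 : F) ^ ((bar m i + bar m j) * (bar m k + bar m l))) •
            (if l = i then e k j else 0)
  gen : Algebra.adjoin F
      (Set.range fun pr : Fin (m + n) × Fin (m + n) => e pr.1 pr.2) = ⊤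

attribute [instance] GLSuperUEA.ringU GLSuperUEA.algU

/-- The matrix unit `e_{ij}` acting on the natural module `V = F^{m+n}` (realised as
functions `Fin (m+n) → F`): `e_{ij} v_k = δ_{jk} v_i`. -/
def natAct (F : Type*) [Field F] (m n : ℕ) (i j : Fin (m + n)) :
    (Fin (m + n) → F) →ₗ[F] (Fin (m + n) → F) where
  toFun w := fun k => if k = i then w j else 0
  map_add' a b := by funext k; by_cases h : k = i <;> simp [h]
  map_smul' c a := by funext k; by_cases h : k = i <;> simp [h]

/-!
The split Casimir `Ω` commutes with the action of `gl(m|n)` on `M ⊗ V`, hence so does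
`Y = (Ω - p)(Ω - q)`. The vectors `w` with `Y (σ^a w ⊗ V) = 0` for all `a` then form a
`U`-submodule of `M`, so it suffices that `Y` kills `v ⊗ V`. For even `k`, `v ⊗ v_k` is an
eigenvector of `Ω` of eigenvalue `p`. For odd `k`, `v ⊗ v_k` and `w_k = ∑_{s even} e_{ks} v ⊗ v_s`
span an `Ω`-stable plane on which `Ω` acts by `[[q + m, m (p - q - m)], [1, p - m]]`, whose
characteristic polynomial is `(t - p)(t - q)`.
-/

open TensorProduct

theorem natAct_single {F : Type*} [Field F] {m n : ℕ} (i j k : Fin (m + n)) :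
    natAct F m n i j (Pi.single k 1) = if j = k then Pi.single i 1 else 0 := by
  funext l
  by_cases hj : j = k <;> by_cases hl : l = i <;> simp [natAct, hj, hl]

theorem TensorProduct.ext_tmul_single {F M P ι : Type*} [Field F] [AddCommGroup M] [Module F M]
    [AddCommGroup P] [Module F P] [Fintype ι] [DecidableEq ι] {f g : M ⊗[F] (ι → F) →ₗ[F] P}
    (h : ∀ w k, f (w ⊗ₜ Pi.single k 1) = g (w ⊗ₜ Pi.single k 1)) : f = g :=
  TensorProduct.ext' fun w x => by
    rw [← (Pi.basisFun F ι).sum_repr x]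
    simp [tmul_sum, tmul_smul, h]

theorem neg_one_pow_mul_self {F : Type*} [Ring F] (a : ℕ) : (-1 : F) ^ a * (-1) ^ a = 1 := by
  rw [← pow_add, Even.neg_one_pow ⟨a, rfl⟩]

section Involution

variable {F M : Type*} [Field F] [AddCommGroup M] [Module F M] {σ : Module.End F M}

theorem Function.Involutive.pow_eq_pow_of_mod_two_eq (hσ : Function.Involutive σ) {a b : ℕ}
    (h : a % 2 = b % 2) : σ ^ a = σ ^ b := by
  have hsq : σ ^ 2 = 1 := LinearMap.ext fun w => hσ w
  rw [pow_eq_pow_mod a hsq, pow_eq_pow_mod b hsq, h]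

theorem Function.Involutive.ite_mod_two_eq_pow (hσ : Function.Involutive σ) (a : ℕ) :
    (if a % 2 = 1 then σ else LinearMap.id) = σ ^ a := by
  rcases Nat.mod_two_eq_zero_or_one a with ha | ha
  · rw [if_neg (by omega), hσ.pow_eq_pow_of_mod_two_eq (b := 0) ha, pow_zero]; rfl
  · rw [if_pos ha, hσ.pow_eq_pow_of_mod_two_eq (b := 1) ha, pow_one]

theorem pow_apply_of_apply_eq_self {v : M} (hv : σ v = v) (a : ℕ) : (σ ^ a) v = v := by
  rw [Module.End.pow_apply]; exact Function.iterate_fixed hv a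

end Involution

namespace GLSuperUEA

variable {F : Type*} [Field F] {m n : ℕ} (S : GLSuperUEA F m n)
  {M : Type*} [AddCommGroup M] [Module F M] [Module S.U M]

def IsParityOperator (σ : Module.End F M) : Prop :=
  ∀ (i j : Fin (m + n)) (w : M),
    σ (S.e i j • w) = ((-1 : F) ^ (bar m i + bar m j)) • (S.e i j • σ w)

/-- `v` is even and spans the one-dimensional `gl(m) ⊕ gl(n)`-module of weight `λ_{p,q}` at the
top of the Kac module `V(λ_{p,q})`. -/
structure IsKacHighestWeightVector (σ : Module.End F M) (p q : F) (v : M) : Prop where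
  parity_eq : σ v = v
  e_diag_smul : ∀ i : Fin (m + n), S.e i i • v = (if (i : ℕ) < m then p else -(q + m)) • v
  e_smul_eq_zero : ∀ i j : Fin (m + n), i ≠ j → (i : ℕ) < m ∨ m ≤ (j : ℕ) → S.e i j • v = 0

variable {S} {σ : Module.End F M}

theorem IsParityOperator.pow_apply_smul (hσ : S.IsParityOperator σ)
    (a : ℕ) (i j : Fin (m + n)) (w : M) :
    (σ ^ a) (S.e i j • w) = ((-1 : F) ^ (a * (bar m i + bar m j))) • (S.e i j • (σ ^ a) w) := by
  induction a generalizing w with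
  | zero => simp
  | succ a ih =>
    rw [pow_succ, Module.End.mul_apply, hσ, map_smul, ih, smul_smul, ← pow_add, add_one_mul,
      add_comm, Module.End.mul_apply]

variable [SMulCommClass S.U F M]

variable (S σ) in
/-- The split Casimir `Ω = ∑ (-1)^{bar s} e_{rs} ⊗ e_{sr}` acting on `M ⊗ V`, the Koszul sign
of moving `e_{sr}` past `M` being realised by `σ ^ (bar s + bar r)`. -/
noncomputable def splitCasimir : Module.End F (M ⊗[F] (Fin (m + n) → F)) :=
  ∑ r : Fin (m + n), ∑ s : Fin (m + n),
    ((-1 : F) ^ bar m s) •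
      map (DistribSMul.toLinearMap F M (S.e r s) ∘ₗ σ ^ (bar m s + bar m r)) (natAct F m n s r)

variable (S σ) in
/-- The action `e_{ij} ⊗ 1 + 1 ⊗ e_{ij}` of `e_{ij}` on `M ⊗ V`, with the Koszul sign. -/
noncomputable def tensorAct (i j : Fin (m + n)) :
    Module.End F (M ⊗[F] (Fin (m + n) → F)) :=
  map (DistribSMul.toLinearMap F M (S.e i j)) LinearMap.id
    + map (σ ^ (bar m i + bar m j)) (natAct F m n i j)

theorem splitCasimir_tmul_single (w : M) (k : Fin (m + n)) :
    S.splitCasimir σ (w ⊗ₜ Pi.single k 1)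
      = ∑ s : Fin (m + n),
          ((-1 : F) ^ bar m s) • (S.e k s • (σ ^ (bar m s + bar m k)) w) ⊗ₜ Pi.single s 1 := by
  simp only [splitCasimir, LinearMap.sum_apply, LinearMap.smul_apply, map_tmul, natAct_single,
    tmul_ite, smul_ite, smul_zero]
  rw [Finset.sum_comm]
  simp

theorem tensorAct_tmul (i j : Fin (m + n)) (w : M) (x : Fin (m + n) → F) :
    S.tensorAct σ i j (w ⊗ₜ x)
      = (S.e i j • w) ⊗ₜ x + (σ ^ (bar m i + bar m j)) w ⊗ₜ natAct F m n i j x :=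
  rfl

variable [IsScalarTower F S.U M]

omit [SMulCommClass S.U F M] in
theorem e_smul_e_smul (i j k l : Fin (m + n)) (u : M) :
    S.e i j • S.e k l • u
      = ((-1 : F) ^ ((bar m i + bar m j) * (bar m k + bar m l))) • S.e k l • S.e i j • u
        + (if j = k then S.e i l • u else 0)
        - ((-1 : F) ^ ((bar m i + bar m j) * (bar m k + bar m l))) •
            (if l = i then S.e k j • u else 0) := by
  have h := congrArg (· • u) (S.supercomm i j k l)
  simp only [sub_smul, smul_assoc, mul_smul, ite_smul, zero_smul] at h
  rw [sub_eq_iff_eq_add] at h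
  rw [h]; abel

theorem IsParityOperator.e_smul_pow_apply_e_smul (hσ : S.IsParityOperator σ)
    (hinv : Function.Involutive σ) (i j k s : Fin (m + n)) (w : M) :
    S.e k s • (σ ^ (bar m s + bar m k)) (S.e i j • w)
        + (if j = k then S.e i s • (σ ^ (bar m s + bar m i)) ((σ ^ (bar m i + bar m j)) w) else 0)
      = S.e i j • S.e k s • (σ ^ (bar m s + bar m k)) w
        + (if s = i then ((-1 : F) ^ ((bar m i + bar m k) * (bar m i + bar m j))) •
            S.e k j • (σ ^ (bar m i + bar m k)) w else 0) := by
  have hpow : (σ ^ (bar m s + bar m i)) ((σ ^ (bar m i + bar m j)) w)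
      = (σ ^ (bar m s + bar m j)) w := by
    rw [← Module.End.mul_apply, ← pow_add,
      hinv.pow_eq_pow_of_mod_two_eq (b := bar m s + bar m j) (by omega)]
  rw [hσ.pow_apply_smul, smul_comm (S.e k s), e_smul_e_smul, add_comm (bar m k)]
  simp only [smul_sub, smul_add, smul_smul, neg_one_pow_mul_self, one_smul, smul_ite, smul_zero]
  rcases eq_or_ne j k with rfl | hjk <;> rcases eq_or_ne s i with rfl | hsi
  all_goals simp only [if_true, if_false, *]
  all_goals abel

theorem IsParityOperator.commute_splitCasimir_tensorAct (hσ : S.IsParityOperator σ)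
    (hinv : Function.Involutive σ) (i j : Fin (m + n)) :
    Commute (S.splitCasimir σ) (S.tensorAct σ i j) := by
  refine TensorProduct.ext_tmul_single fun w k => ?_
  simp only [Module.End.mul_apply]
  calc S.splitCasimir σ (S.tensorAct σ i j (w ⊗ₜ Pi.single k 1))
      = ∑ s : Fin (m + n), ((-1 : F) ^ bar m s) •
          (S.e k s • (σ ^ (bar m s + bar m k)) (S.e i j • w)
            + (if j = k then
                S.e i s • (σ ^ (bar m s + bar m i)) ((σ ^ (bar m i + bar m j)) w) else 0))
            ⊗ₜ Pi.single s 1 := by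
        rw [tensorAct_tmul, natAct_single, map_add, splitCasimir_tmul_single]
        split_ifs with hjk
        · rw [splitCasimir_tmul_single, ← Finset.sum_add_distrib]
          simp only [add_tmul, smul_add]
        · simp
    _ = ∑ s : Fin (m + n), ((-1 : F) ^ bar m s) •
          (S.e i j • S.e k s • (σ ^ (bar m s + bar m k)) w
            + (if s = i then ((-1 : F) ^ ((bar m i + bar m k) * (bar m i + bar m j))) •
                S.e k j • (σ ^ (bar m i + bar m k)) w else 0))
            ⊗ₜ Pi.single s 1 := by
        simp only [hσ.e_smul_pow_apply_e_smul hinv]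
    _ = S.tensorAct σ i j (S.splitCasimir σ (w ⊗ₜ Pi.single k 1)) := by
        rw [splitCasimir_tmul_single, map_sum]
        simp only [map_smul, tensorAct_tmul, natAct_single, add_tmul, ite_tmul, tmul_ite,
          smul_add, smul_ite, smul_zero, Finset.sum_add_distrib, Finset.sum_ite_eq,
          Finset.sum_ite_eq', Finset.mem_univ, if_true]
        congr 1
        rw [hσ.pow_apply_smul, ← Module.End.mul_apply, ← pow_add,
          hinv.pow_eq_pow_of_mod_two_eq (a := bar m i + bar m j + (bar m j + bar m k))
            (b := bar m i + bar m k) (by omega), smul_tmul', smul_tmul', smul_smul, smul_smul]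
        congr 2
        simp only [bar]
        split_ifs <;> norm_num

omit [SMulCommClass S.U F M] in
theorem submodule_eq_top_of_e_smul_mem {v : M} (hcyc : Submodule.span S.U {v} = ⊤)
    {N : Submodule F M} (hv : v ∈ N) (hN : ∀ i j, ∀ w ∈ N, S.e i j • w ∈ N) : N = ⊤ := by
  have hU (u : S.U) : ∀ w ∈ N, u • w ∈ N := by
    have hu : u ∈ Algebra.adjoin F
        (Set.range fun pr : Fin (m + n) × Fin (m + n) => S.e pr.1 pr.2) := S.gen ▸ Algebra.mem_top
    induction hu using Algebra.adjoin_induction with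
    | mem x hx => obtain ⟨⟨i, j⟩, rfl⟩ := hx; exact hN i j
    | algebraMap c => intro w hw; rw [algebraMap_smul]; exact N.smul_mem c hw
    | add x y _ _ hx hy => intro w hw; rw [add_smul]; exact N.add_mem (hx w hw) (hy w hw)
    | mul x y _ _ hx hy => intro w hw; rw [mul_smul]; exact hx _ (hy w hw)
  refine eq_top_iff.2 fun w _ => ?_
  obtain ⟨u, rfl⟩ := Submodule.mem_span_singleton.1 (hcyc ▸ Submodule.mem_top :
    w ∈ Submodule.span S.U {v})
  exact hU u v hv

theorem IsParityOperator.eq_zero_of_commute_tensorAct (hσ : S.IsParityOperator σ) {v : M}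
    (hσv : σ v = v) (hcyc : Submodule.span S.U {v} = ⊤)
    {Y : Module.End F (M ⊗[F] (Fin (m + n) → F))} (hY : ∀ i j, Commute Y (S.tensorAct σ i j))
    (hYv : ∀ x, Y (v ⊗ₜ x) = 0) : Y = 0 := by
  -- The Koszul sign in `tensorAct` forces us to close `N` under `σ` as well.
  let N : Submodule F M :=
    { carrier := {w | ∀ a x, Y ((σ ^ a) w ⊗ₜ x) = 0}
      add_mem' := fun hw hw' a x => by rw [map_add, add_tmul, map_add, hw, hw', add_zero]
      zero_mem' := fun a x => by rw [map_zero, zero_tmul, map_zero]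
      smul_mem' := fun c w hw a x => by rw [map_smul, ← smul_tmul', map_smul, hw, smul_zero] }
  have hN : N = ⊤ := by
    refine submodule_eq_top_of_e_smul_mem hcyc (fun a x => ?_) fun i j w hw a x => ?_
    · rw [pow_apply_of_apply_eq_self hσv]; exact hYv x
    · have hsplit : (S.e i j • (σ ^ a) w) ⊗ₜ x = S.tensorAct σ i j ((σ ^ a) w ⊗ₜ x)
          - (σ ^ (bar m i + bar m j + a)) w ⊗ₜ natAct F m n i j x := by
        rw [tensorAct_tmul, pow_add σ (bar m i + bar m j) a, Module.End.mul_apply,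
          add_sub_cancel_right]
      rw [hσ.pow_apply_smul, ← smul_tmul', map_smul, hsplit, map_sub, ← Module.End.mul_apply,
        (hY i j).eq, Module.End.mul_apply, hw a x, hw, map_zero, sub_zero, smul_zero]
  refine TensorProduct.ext' fun w x => ?_
  simpa using (hN ▸ Submodule.mem_top : w ∈ N) 0 x

section HighestWeight

variable {p q : F} {v : M}

variable (S v) in
noncomputable def evenLoweringSum (k : Fin (m + n)) : M ⊗[F] (Fin (m + n) → F) :=
  ∑ s ∈ Finset.univ.filter (fun s : Fin (m + n) => (s : ℕ) < m), (S.e k s • v) ⊗ₜ Pi.single s 1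

omit [IsScalarTower F S.U M] in
theorem IsKacHighestWeightVector.splitCasimir_tmul_single_of_lt
    (hv : S.IsKacHighestWeightVector σ p q v) {k : Fin (m + n)} (hk : (k : ℕ) < m) :
    S.splitCasimir σ (v ⊗ₜ Pi.single k 1) = p • v ⊗ₜ Pi.single k 1 := by
  simp only [splitCasimir_tmul_single, pow_apply_of_apply_eq_self hv.parity_eq]
  rw [Finset.sum_eq_single k
    (fun s _ hsk => by rw [hv.e_smul_eq_zero k s hsk.symm (.inl hk), zero_tmul, smul_zero])
    (by simp), hv.e_diag_smul, if_pos hk, bar, if_pos hk, pow_zero, one_smul, smul_tmul']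

omit [IsScalarTower F S.U M] in
theorem IsKacHighestWeightVector.splitCasimir_tmul_single_of_le
    (hv : S.IsKacHighestWeightVector σ p q v) {k : Fin (m + n)} (hk : m ≤ (k : ℕ)) :
    S.splitCasimir σ (v ⊗ₜ Pi.single k 1)
      = (q + m) • v ⊗ₜ Pi.single k 1 + S.evenLoweringSum v k := by
  have hterm (s : Fin (m + n)) : ((-1 : F) ^ bar m s) • (S.e k s • v) ⊗ₜ[F] Pi.single s 1
      = (if s = k then (q + m) • v ⊗ₜ[F] Pi.single k 1 else 0)
        + if (s : ℕ) < m then (S.e k s • v) ⊗ₜ[F] (Pi.single s 1 : Fin (m + n) → F) else 0 := by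
    by_cases hs : (s : ℕ) < m
    · have hsk : s ≠ k := fun h => by omega
      simp [hs, hsk, bar]
    · rcases eq_or_ne s k with rfl | hsk
      · simp only [hs, bar, hv.e_diag_smul, if_true, if_false, add_zero, pow_one, smul_tmul',
          smul_smul]
        congr 2
        ring
      · simp [hs, hsk, hv.e_smul_eq_zero k s hsk.symm (.inr (by omega))]
  simp only [splitCasimir_tmul_single, pow_apply_of_apply_eq_self hv.parity_eq, hterm,
    Finset.sum_add_distrib, Finset.sum_ite_eq', Finset.mem_univ, if_true, evenLoweringSum,
    Finset.sum_filter]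

theorem IsKacHighestWeightVector.e_smul_e_smul_of_lt_of_le
    (hv : S.IsKacHighestWeightVector σ p q v) {s k : Fin (m + n)} (hs : (s : ℕ) < m)
    (hk : m ≤ (k : ℕ)) (t : Fin (m + n)) :
    S.e s t • S.e k s • v
      = (if t = s then p • S.e k s • v else 0) + (if t = k then (p - (q + m)) • v else 0)
        - if (t : ℕ) < m then S.e k t • v else 0 := by
  have hst : S.e s t • v = if t = s then p • v else 0 := by
    rcases eq_or_ne t s with rfl | hts
    · rw [hv.e_diag_smul, if_pos hs, if_pos rfl]
    · rw [hv.e_smul_eq_zero s t hts.symm (.inl hs), if_neg hts]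
  have hbs : bar m s = 0 := if_pos hs
  have hbk : bar m k = 1 := if_neg (by omega)
  rw [e_smul_e_smul, hst, if_pos rfl, hbs, hbk]
  by_cases ht : (t : ℕ) < m
  · have htk : t ≠ k := fun h => by subst h; omega
    have hbt : bar m t = 0 := if_pos ht
    rcases eq_or_ne t s with rfl | hts
    · simp [ht, htk, hbt, smul_comm (S.e k t) p]
    · simp [ht, htk, hts, hbt]
  · have hts : t ≠ s := fun h => by subst h; omega
    have hbt : bar m t = 1 := if_neg ht
    rcases eq_or_ne t k with rfl | htk
    · simp only [hv.e_diag_smul, hs, ht, hts, hbt, if_true, if_false, smul_zero]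
      module
    · simp [ht, htk, hts, hbt, hv.e_smul_eq_zero k t htk.symm (.inr (by omega))]

theorem IsKacHighestWeightVector.splitCasimir_e_smul_tmul_single (hσ : S.IsParityOperator σ)
    (hv : S.IsKacHighestWeightVector σ p q v) {s k : Fin (m + n)} (hs : (s : ℕ) < m)
    (hk : m ≤ (k : ℕ)) :
    S.splitCasimir σ ((S.e k s • v) ⊗ₜ Pi.single s 1)
      = p • (S.e k s • v) ⊗ₜ Pi.single s 1 + (p - (q + m)) • v ⊗ₜ Pi.single k 1
        - S.evenLoweringSum v k := by
  have hbs : bar m s = 0 := if_pos hs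
  have hbk : bar m k = 1 := if_neg (by omega)
  have hterm (t : Fin (m + n)) :
      ((-1 : F) ^ bar m t) • (S.e s t • (σ ^ (bar m t + bar m s)) (S.e k s • v)) ⊗ₜ[F]
        (Pi.single t 1 : Fin (m + n) → F) = (S.e s t • S.e k s • v) ⊗ₜ Pi.single t 1 := by
    rw [hσ.pow_apply_smul, pow_apply_of_apply_eq_self hv.parity_eq, smul_comm (S.e s t),
      smul_tmul', smul_smul]
    simp only [hbs, hbk, add_zero, mul_one, neg_one_pow_mul_self, one_smul]
  simp only [splitCasimir_tmul_single, hterm, hv.e_smul_e_smul_of_lt_of_le hs hk, sub_tmul,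
    add_tmul, ite_tmul, Finset.sum_sub_distrib, Finset.sum_add_distrib,
    Finset.sum_ite_eq', Finset.mem_univ, if_true, evenLoweringSum, Finset.sum_filter, smul_tmul']

theorem IsKacHighestWeightVector.splitCasimir_evenLoweringSum (hσ : S.IsParityOperator σ)
    (hv : S.IsKacHighestWeightVector σ p q v) {k : Fin (m + n)} (hk : m ≤ (k : ℕ)) :
    S.splitCasimir σ (S.evenLoweringSum v k)
      = (p - m) • S.evenLoweringSum v k + (m * (p - (q + m))) • v ⊗ₜ Pi.single k 1 := by
  conv_lhs => rw [evenLoweringSum, map_sum]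
  rw [Finset.sum_congr rfl fun s hs =>
      hv.splitCasimir_e_smul_tmul_single hσ (Finset.mem_filter.1 hs).2 hk,
    Finset.sum_sub_distrib, Finset.sum_add_distrib, Finset.sum_const, Finset.sum_const,
    Fin.card_filter_val_lt, min_eq_right (Nat.le_add_right m n), ← Finset.smul_sum,
    ← evenLoweringSum]
  module

theorem IsKacHighestWeightVector.cyclotomic_apply_tmul_single (hσ : S.IsParityOperator σ)
    (hv : S.IsKacHighestWeightVector σ p q v) (k : Fin (m + n)) :
    ((S.splitCasimir σ - p • 1) * (S.splitCasimir σ - q • 1)) (v ⊗ₜ Pi.single k 1) = 0 := by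
  simp only [Module.End.mul_apply, LinearMap.sub_apply, LinearMap.smul_apply, Module.End.one_apply]
  by_cases hk : (k : ℕ) < m
  · rw [hv.splitCasimir_tmul_single_of_lt hk, map_sub, map_smul, map_smul,
      hv.splitCasimir_tmul_single_of_lt hk]
    module
  · rw [hv.splitCasimir_tmul_single_of_le (not_lt.1 hk), map_sub, map_add, map_smul, map_smul,
      hv.splitCasimir_tmul_single_of_le (not_lt.1 hk),
      hv.splitCasimir_evenLoweringSum hσ (not_lt.1 hk)]
    module

theorem IsKacHighestWeightVector.splitCasimir_cyclotomic_eq_zero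
    (hv : S.IsKacHighestWeightVector σ p q v) (hσ : S.IsParityOperator σ)
    (hinv : Function.Involutive σ) (hcyc : Submodule.span S.U {v} = ⊤) :
    (S.splitCasimir σ - p • 1) * (S.splitCasimir σ - q • 1) = 0 := by
  refine hσ.eq_zero_of_commute_tensorAct hv.parity_eq hcyc (fun i j => ?_) fun x => ?_
  · have hΩ := hσ.commute_splitCasimir_tensorAct hinv i j
    exact (hΩ.sub_left ((Commute.one_left _).smul_left p)).mul_left
      (hΩ.sub_left ((Commute.one_left _).smul_left q))
  · rw [← (Pi.basisFun F (Fin (m + n))).sum_repr x]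
    simp [tmul_sum, tmul_smul, hv.cyclotomic_apply_tmul_single hσ]

end HighestWeight

end GLSuperUEA

theorem cyclotomic_relation_on_tensor_space_general (F : Type*) [Field F]
    (m n : ℕ) (p q : ℤ) (S : GLSuperUEA F m n)
    (M : Type*) [AddCommGroup M] [Module F M] [Module S.U M]
    [IsScalarTower F S.U M] [SMulCommClass S.U F M]
    (v : M) (σ : M →ₗ[F] M)
    (hσσ : ∀ w : M, σ (σ w) = w)
    (hσe : ∀ (i j : Fin (m + n)) (w : M),
      σ (S.e i j • w) = ((-1 : F) ^ (bar m i + bar m j)) • (S.e i j • σ w))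
    (hσv : σ v = v)
    (hcyc : Submodule.span S.U {v} = ⊤)
    (hwt : ∀ i : Fin (m + n),
      S.e i i • v = (if (i : ℕ) < m then ((p : F)) else (((-(q + (m : ℤ))) : F))) • v)
    (hraise : ∀ i j : Fin (m + n), i < j → S.e i j • v = 0)
    (hlower : ∀ i j : Fin (m + n), j < i → (((i : ℕ) < m) ∨ (m ≤ (j : ℕ))) →
      S.e i j • v = 0)
    (d : ℕ) :
    let X : TensorProduct F M (Fin (m + n) → F) →ₗ[F] TensorProduct F M (Fin (m + n) → F) :=
      ∑ r : Fin (m + n), ∑ s : Fin (m + n),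
        ((-1 : F) ^ bar m (s : ℕ)) •
          TensorProduct.map
            ((DistribMulAction.toLinearMap F M (S.e r s)) ∘ₗ
              (if (bar m (s : ℕ) + bar m (r : ℕ)) % 2 = 1 then σ else LinearMap.id))
            (natAct F m n s r)
    TensorProduct.map
      ((X - (p : F) • LinearMap.id) ∘ₗ (X - (q : F) • LinearMap.id))
      (LinearMap.id : ((Fin (d - 1) → Fin (m + n)) → F) →ₗ[F] ((Fin (d - 1) → Fin (m + n)) → F))
      = 0 := by
  intro X
  have hX : X = S.splitCasimir σ := by
    simp only [X, GLSuperUEA.splitCasimir, Function.Involutive.ite_mod_two_eq_pow hσσ]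
    rfl
  have hv : S.IsKacHighestWeightVector σ p q v :=
    ⟨hσv, fun i => by rw [hwt]; push_cast; rfl,
      fun i j hij hij' => (lt_or_gt_of_ne hij).elim (hraise i j) (hlower i j · hij')⟩
  rw [hX]
  exact (congrArg (map · LinearMap.id) (hv.splitCasimir_cyclotomic_eq_zero hσe hσσ hcyc)).trans
    (map_zero_left _)

/-- The element `(x_1 - p)(x_1 - q)` of the degenerate affine Hecke algebra `H_d` acts
as zero on `V(λ_{p,q}) ⊗ V^{⊗d}`.  Here `M` is the Kac module `V(λ_{p,q})`: a cyclic
highest weight module of highest weight `λ_{p,q}`, with its `ℤ₂`-grading recorded by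
the parity involution `σ`, on which the off-diagonal part of `gl(m)⊕gl(n)` and the
odd raising operators kill the (even) highest weight vector `v`.  The generator `x_1`
acts on `V(λ_{p,q}) ⊗ V ⊗ V^{⊗(d-1)}` by the operator
`Ω = Σ_{r,s} (-1)^{bar s} e_{rs} ⊗ e_{sr}` on the first two tensor factors (with the
super sign realised by `σ`) and by the identity on the remaining factors; the theorem
states `(Ω - p)(Ω - q) ⊗ id = 0`, so the `H_d`-action factors through the level-two
cyclotomic quotient `H_d^{p,q}`. -/
theorem cyclotomic_relation_on_tensor_space (F : Type*) [Field F] [CharZero F]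
    (m n : ℕ) (p q : ℤ) (hpq : p ≤ q) (S : GLSuperUEA F m n)
    (M : Type*) [AddCommGroup M] [Module F M] [Module S.U M]
    [IsScalarTower F S.U M] [SMulCommClass S.U F M]
    (v : M) (σ : M →ₗ[F] M)
    (hσσ : ∀ w : M, σ (σ w) = w)
    (hσe : ∀ (i j : Fin (m + n)) (w : M),
      σ (S.e i j • w) = ((-1 : F) ^ (bar m i + bar m j)) • (S.e i j • σ w))
    (hσv : σ v = v)
    (hcyc : Submodule.span S.U {v} = ⊤)
    (hwt : ∀ i : Fin (m + n),
      S.e i i • v = (if (i : ℕ) < m then ((p : F)) else (((-(q + (m : ℤ))) : F))) • v)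
    (hraise : ∀ i j : Fin (m + n), i < j → S.e i j • v = 0)
    (hlower : ∀ i j : Fin (m + n), j < i → (((i : ℕ) < m) ∨ (m ≤ (j : ℕ))) →
      S.e i j • v = 0)
    (d : ℕ) (hd : 0 < d) :
    let X : TensorProduct F M (Fin (m + n) → F) →ₗ[F] TensorProduct F M (Fin (m + n) → F) :=
      ∑ r : Fin (m + n), ∑ s : Fin (m + n),
        ((-1 : F) ^ bar m (s : ℕ)) •
          TensorProduct.map
            ((DistribMulAction.toLinearMap F M (S.e r s)) ∘ₗ
              (if (bar m (s : ℕ) + bar m (r : ℕ)) % 2 = 1 then σ else LinearMap.id))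
            (natAct F m n s r)
    TensorProduct.map
      ((X - (p : F) • LinearMap.id) ∘ₗ (X - (q : F) • LinearMap.id))
      (LinearMap.id : ((Fin (d - 1) → Fin (m + n)) → F) →ₗ[F] ((Fin (d - 1) → Fin (m + n)) → F))
      = 0 :=
  cyclotomic_relation_on_tensor_space_general F m n p q S M v σ hσσ hσe hσv hcyc hwt hraise hlower d
end

section
/- In the algebra K₁^∞ (the path algebra of the doubly infinite quiver with arrows a_i: i → i+1, b_i: i+1 → i modulo the relations a_i b_i = b_{i-1} a_{i-1}, a_i a_{i+1} = 0, b_{i+1} b_i = 0), the set {e_i, c_i := b_i a_i, a_i, b_i : i ∈ ℤ} is an F-basis; in particular, the space e_j K₁^∞ e_i is zero whenever |i - j| ≥ 2. -/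
/-- Generators of the path algebra of the doubly infinite quiver with vertex set `ℤ`
and arrows `a_i : i → i+1` and `b_i : i+1 → i`: a lazy path `e i` at each vertex and
the two families of arrows. -/
inductive PathGen : Type
  | e : ℤ → PathGen
  | a : ℤ → PathGen
  | b : ℤ → PathGen

open FreeAlgebra in
/-- The relations presenting `K₁^∞`: the path-algebra relations for the doubly infinite
quiver (orthogonal lazy idempotents, source/target relations for the arrows, with
products written as left-to-right concatenation of paths), together with the relations
`a_i b_i = b_{i-1} a_{i-1}`, `a_i a_{i+1} = 0` and `b_{i+1} b_i = 0`. -/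
inductive PathRel (F : Type*) [Field F] :
    FreeAlgebra F PathGen → FreeAlgebra F PathGen → Prop
  | ee (i j : ℤ) : PathRel F (ι F (PathGen.e i) * ι F (PathGen.e j))
      (if i = j then ι F (PathGen.e i) else 0)
  | ea (i j : ℤ) : PathRel F (ι F (PathGen.e j) * ι F (PathGen.a i))
      (if j = i then ι F (PathGen.a i) else 0)
  | ae (i j : ℤ) : PathRel F (ι F (PathGen.a i) * ι F (PathGen.e j))
      (if j = i + 1 then ι F (PathGen.a i) else 0)
  | eb (i j : ℤ) : PathRel F (ι F (PathGen.e j) * ι F (PathGen.b i))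
      (if j = i + 1 then ι F (PathGen.b i) else 0)
  | be (i j : ℤ) : PathRel F (ι F (PathGen.b i) * ι F (PathGen.e j))
      (if j = i then ι F (PathGen.b i) else 0)
  | ab (i : ℤ) : PathRel F (ι F (PathGen.a i) * ι F (PathGen.b i))
      (ι F (PathGen.b (i - 1)) * ι F (PathGen.a (i - 1)))
  | aa (i : ℤ) : PathRel F (ι F (PathGen.a i) * ι F (PathGen.a (i + 1))) 0
  | bb (i : ℤ) : PathRel F (ι F (PathGen.b (i + 1)) * ι F (PathGen.b i)) 0

/-- The algebra `K₁^∞`: the path algebra of the doubly infinite quiver modulo the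
relations `a_i b_i = b_{i-1} a_{i-1}`, `a_i a_{i+1} = 0`, `b_{i+1} b_i = 0`. -/
def KOneInf (F : Type*) [Field F] : Type _ := RingQuot (PathRel F)

noncomputable instance (F : Type*) [Field F] : Ring (KOneInf F) :=
  inferInstanceAs (Ring (RingQuot (PathRel F)))

noncomputable instance (F : Type*) [Field F] : Algebra F (KOneInf F) :=
  inferInstanceAs (Algebra F (RingQuot (PathRel F)))

/-- The lazy path (idempotent) `e_i` at vertex `i` in `K₁^∞`. -/
noncomputable def Ke (F : Type*) [Field F] (i : ℤ) : KOneInf F :=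
  RingQuot.mkAlgHom F (PathRel F) (FreeAlgebra.ι F (PathGen.e i))

/-- The arrow `a_i : i → i+1` in `K₁^∞`. -/
noncomputable def Ka (F : Type*) [Field F] (i : ℤ) : KOneInf F :=
  RingQuot.mkAlgHom F (PathRel F) (FreeAlgebra.ι F (PathGen.a i))

/-- The arrow `b_i : i+1 → i` in `K₁^∞`. -/
noncomputable def Kb (F : Type*) [Field F] (i : ℤ) : KOneInf F :=
  RingQuot.mkAlgHom F (PathRel F) (FreeAlgebra.ι F (PathGen.b i))

/-- The loop `c_i = b_i ∘ a_i` at vertex `i` (as a concatenation of paths this is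
`a_i` followed by `b_i`). -/
noncomputable def Kc (F : Type*) [Field F] (i : ℤ) : KOneInf F := Ka F i * Kb F i

/-!
Every product of a generator `e_i, a_i, b_i` with one of `e_k, c_k, a_k, b_k` is `0` or again one
of these elements (`c_k = a_k b_k = b_{k-1} a_{k-1}`, while `a a = 0 = b b`). So their span is
closed under multiplication, hence is the non-unital subalgebra generated by the `e_i, a_i, b_i`,
and together with `1` it is all of `K₁^∞`. Each of them is a path from a vertex `s` to a vertex
`t` with `|t - s| ≤ 1`, so `e_j (-) e_i` kills it (and `1`) when `|i - j| ≥ 2`.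

For linear independence, let `K₁^∞` act by left multiplication on formal, possibly infinite,
coefficient vectors `ℤ × Fin 4 → F`: a generator acts by precomposition with a partial map, the
defining relations are checked coordinatewise, and a basis path sends the coefficient vector of the
formal unit `∑ e_i` to its own indicator vector.
-/

theorem Algebra.adjoin_toSubmodule_eq_span_one_sup {R A : Type*} [CommSemiring R] [Semiring A]
    [Algebra R A] (s : Set A) :
    Subalgebra.toSubmodule (Algebra.adjoin R s) =
      Submodule.span R {1} ⊔ (NonUnitalAlgebra.adjoin R s).toSubmodule := by
  rw [Algebra.adjoin_eq_span, Submonoid.closure_eq_one_union, Submodule.span_union,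
    NonUnitalAlgebra.adjoin_eq_span]

theorem Option.elim_ite_some_none {α β : Type*} (c : Prop) [Decidable c] (a : α) (b : β)
    (f : α → β) : (if c then some a else none).elim b f = if c then f a else b := by
  split_ifs <;> rfl

namespace KOneInf

open FreeAlgebra Submodule

variable {F : Type*} [Field F]

noncomputable def mk : FreeAlgebra F PathGen →ₐ[F] KOneInf F := RingQuot.mkAlgHom F (PathRel F)

theorem mk_surjective : Function.Surjective (mk (F := F)) := RingQuot.mkAlgHom_surjective F _

theorem mk_eq_mk_of_rel {x y : FreeAlgebra F PathGen} (h : PathRel F x y) : mk x = mk y :=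
  RingQuot.mkAlgHom_rel F h

@[simp] theorem mk_ι_e (i : ℤ) : mk (ι F (PathGen.e i)) = Ke F i := rfl
@[simp] theorem mk_ι_a (i : ℤ) : mk (ι F (PathGen.a i)) = Ka F i := rfl
@[simp] theorem mk_ι_b (i : ℤ) : mk (ι F (PathGen.b i)) = Kb F i := rfl

section Relations

theorem Ke_mul_Ke (i j : ℤ) : Ke F i * Ke F j = if i = j then Ke F i else 0 := by
  simpa [apply_ite] using mk_eq_mk_of_rel (PathRel.ee (F := F) i j)

theorem Ke_mul_Ka (i j : ℤ) : Ke F j * Ka F i = if j = i then Ka F i else 0 := by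
  simpa [apply_ite] using mk_eq_mk_of_rel (PathRel.ea (F := F) i j)

theorem Ka_mul_Ke (i j : ℤ) : Ka F i * Ke F j = if j = i + 1 then Ka F i else 0 := by
  simpa [apply_ite] using mk_eq_mk_of_rel (PathRel.ae (F := F) i j)

theorem Ke_mul_Kb (i j : ℤ) : Ke F j * Kb F i = if j = i + 1 then Kb F i else 0 := by
  simpa [apply_ite] using mk_eq_mk_of_rel (PathRel.eb (F := F) i j)

theorem Kb_mul_Ke (i j : ℤ) : Kb F i * Ke F j = if j = i then Kb F i else 0 := by
  simpa [apply_ite] using mk_eq_mk_of_rel (PathRel.be (F := F) i j)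

theorem Ka_mul_Kb_self (i : ℤ) : Ka F i * Kb F i = Kb F (i - 1) * Ka F (i - 1) := by
  simpa using mk_eq_mk_of_rel (PathRel.ab (F := F) i)

theorem Ka_mul_Ka_succ (i : ℤ) : Ka F i * Ka F (i + 1) = 0 := by
  simpa using mk_eq_mk_of_rel (PathRel.aa (F := F) i)

theorem Kb_succ_mul_Kb (i : ℤ) : Kb F (i + 1) * Kb F i = 0 := by
  simpa using mk_eq_mk_of_rel (PathRel.bb (F := F) i)

theorem Ka_mul_Ke_succ (i : ℤ) : Ka F i * Ke F (i + 1) = Ka F i := by simp [Ka_mul_Ke]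

theorem Kb_mul_Ke_self (i : ℤ) : Kb F i * Ke F i = Kb F i := by simp [Kb_mul_Ke]

-- Inserting the idempotent at the middle vertex reduces these products to the defining relations.
theorem Ka_mul_Ka (i j : ℤ) : Ka F i * Ka F j = 0 := by
  rw [← Ka_mul_Ke_succ i, mul_assoc, Ke_mul_Ka]
  split_ifs with h
  · subst h; exact Ka_mul_Ka_succ i
  · rw [mul_zero]

theorem Kb_mul_Kb (i j : ℤ) : Kb F i * Kb F j = 0 := by
  rw [← Kb_mul_Ke_self i, mul_assoc, Ke_mul_Kb]
  split_ifs with h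
  · subst h; exact Kb_succ_mul_Kb j
  · rw [mul_zero]

theorem Ka_mul_Kb (i j : ℤ) : Ka F i * Kb F j = if i = j then Kc F i else 0 := by
  rw [← Ka_mul_Ke_succ i, mul_assoc, Ke_mul_Kb]
  simp only [add_left_inj]
  split_ifs with h
  · subst h; rfl
  · rw [mul_zero]

theorem Kb_mul_Ka (i j : ℤ) : Kb F i * Ka F j = if i = j then Kc F (i + 1) else 0 := by
  rw [← Kb_mul_Ke_self i, mul_assoc, Ke_mul_Ka]
  split_ifs with h
  · subst h; rw [Kc, Ka_mul_Kb_self, add_sub_cancel_right]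
  · rw [mul_zero]

theorem Ke_mul_Kc (i j : ℤ) : Ke F j * Kc F i = if j = i then Kc F i else 0 := by
  rw [Kc, ← mul_assoc, Ke_mul_Ka, ite_mul, zero_mul]

theorem Kc_mul_Ke (i j : ℤ) : Kc F i * Ke F j = if j = i then Kc F i else 0 := by
  rw [Kc, mul_assoc, Kb_mul_Ke, mul_ite, mul_zero]

theorem Ka_mul_Kc (i j : ℤ) : Ka F i * Kc F j = 0 := by
  rw [Kc, ← mul_assoc, Ka_mul_Ka, zero_mul]

theorem Kb_mul_Kc (i j : ℤ) : Kb F i * Kc F j = 0 := by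
  rw [Kc, ← mul_assoc, Kb_mul_Ka]
  split_ifs
  · rw [Kc, mul_assoc, Kb_mul_Kb, mul_zero]
  · rw [zero_mul]

end Relations

section Paths

-- The index `(i, t)` stands for `e_i, c_i, a_i, b_i` as `t = 0, 1, 2, 3`, a path from `src`
-- to `tgt`.
def src : ℤ × Fin 4 → ℤ
  | (i, 3) => i + 1
  | (i, _) => i

def tgt : ℤ × Fin 4 → ℤ
  | (i, 2) => i + 1
  | (i, _) => i

theorem abs_tgt_sub_src_le (p : ℤ × Fin 4) : |tgt p - src p| ≤ 1 := by
  obtain ⟨i, t⟩ := p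
  fin_cases t <;> simp [src, tgt]

variable (F) in
noncomputable def path (p : ℤ × Fin 4) : KOneInf F :=
  ![Ke F p.1, Kc F p.1, Ka F p.1, Kb F p.1] p.2

theorem Ke_mul_path (j : ℤ) (p : ℤ × Fin 4) :
    Ke F j * path F p = if j = src p then path F p else 0 := by
  obtain ⟨i, t⟩ := p
  fin_cases t <;>
    simp only [path, src, Fin.zero_eta, Fin.mk_one, Fin.reduceFinMk, Fin.isValue, Matrix.cons_val,
      Matrix.cons_val_zero, Matrix.cons_val_one, Ke_mul_Ke, Ke_mul_Kc, Ke_mul_Ka, Ke_mul_Kb]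
  exact ite_congr rfl (congrArg (Ke F)) fun _ => rfl

theorem path_mul_Ke (p : ℤ × Fin 4) (i : ℤ) :
    path F p * Ke F i = if i = tgt p then path F p else 0 := by
  obtain ⟨k, t⟩ := p
  fin_cases t <;>
    simp only [path, tgt, Fin.zero_eta, Fin.mk_one, Fin.reduceFinMk, Fin.isValue, Matrix.cons_val,
      Matrix.cons_val_zero, Matrix.cons_val_one, Ke_mul_Ke, Kc_mul_Ke, Ka_mul_Ke, Kb_mul_Ke]
  exact if_congr eq_comm rfl rfl

variable (F) in
noncomputable def paths : Submodule F (KOneInf F) := span F (Set.range (path F))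

theorem path_mem_paths (p : ℤ × Fin 4) : path F p ∈ paths F := subset_span ⟨p, rfl⟩

@[simp] theorem Ke_mem_paths (i : ℤ) : Ke F i ∈ paths F := path_mem_paths (i, 0)
@[simp] theorem Kc_mem_paths (i : ℤ) : Kc F i ∈ paths F := path_mem_paths (i, 1)
@[simp] theorem Ka_mem_paths (i : ℤ) : Ka F i ∈ paths F := path_mem_paths (i, 2)
@[simp] theorem Kb_mem_paths (i : ℤ) : Kb F i ∈ paths F := path_mem_paths (i, 3)

theorem mul_mem_paths {u x : KOneInf F} (hu : ∀ p, u * path F p ∈ paths F)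
    (hx : x ∈ paths F) : u * x ∈ paths F :=
  span_le (p := (paths F).comap (LinearMap.mulLeft F u)) |>.mpr (Set.range_subset_iff.mpr hu) hx

theorem Ke_mul_path_mem (i : ℤ) (p : ℤ × Fin 4) : Ke F i * path F p ∈ paths F := by
  rw [Ke_mul_path]; split_ifs <;> simp [path_mem_paths]

theorem Ka_mul_path_mem (i : ℤ) (p : ℤ × Fin 4) : Ka F i * path F p ∈ paths F := by
  obtain ⟨k, t⟩ := p
  fin_cases t <;>
    simp [path, Ka_mul_Ke, Ka_mul_Kc, Ka_mul_Ka, Ka_mul_Kb, apply_ite (· ∈ paths F)]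

theorem Kb_mul_path_mem (i : ℤ) (p : ℤ × Fin 4) : Kb F i * path F p ∈ paths F := by
  obtain ⟨k, t⟩ := p
  fin_cases t <;>
    simp [path, Kb_mul_Ke, Kb_mul_Kc, Kb_mul_Ka, Kb_mul_Kb, apply_ite (· ∈ paths F)]

end Paths

section Spanning

variable (F) in
def generators : Set (KOneInf F) := Set.range (Ke F) ∪ Set.range (Ka F) ∪ Set.range (Kb F)

theorem mul_mem_paths_of_mem_adjoin {u x : KOneInf F}
    (hu : u ∈ NonUnitalAlgebra.adjoin F (generators F)) (hx : x ∈ paths F) :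
    u * x ∈ paths F := by
  induction hu using NonUnitalAlgebra.adjoin_induction generalizing x with
  | mem u hu =>
    rcases hu with (⟨i, rfl⟩ | ⟨i, rfl⟩) | ⟨i, rfl⟩
    exacts [mul_mem_paths (Ke_mul_path_mem i) hx, mul_mem_paths (Ka_mul_path_mem i) hx,
      mul_mem_paths (Kb_mul_path_mem i) hx]
  | add u v _ _ hu hv => rw [add_mul]; exact add_mem (hu hx) (hv hx)
  | zero => rw [zero_mul]; exact zero_mem _
  | mul u v _ _ hu hv => rw [mul_assoc]; exact hu (hv hx)
  | smul r u _ hu => rw [smul_mul_assoc]; exact smul_mem _ r (hu hx)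

theorem paths_eq_adjoin : paths F = (NonUnitalAlgebra.adjoin F (generators F)).toSubmodule := by
  apply le_antisymm
  · refine span_le.mpr (Set.range_subset_iff.mpr fun ⟨i, t⟩ => ?_)
    have hgen {x} (hx : x ∈ generators F) : x ∈ NonUnitalAlgebra.adjoin F (generators F) :=
      NonUnitalAlgebra.subset_adjoin F hx
    fin_cases t
    · exact hgen (.inl (.inl ⟨i, rfl⟩))
    · exact (mul_mem (hgen (.inl (.inr ⟨i, rfl⟩))) (hgen (.inr ⟨i, rfl⟩)) :
        Ka F i * Kb F i ∈ NonUnitalAlgebra.adjoin F (generators F))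
    · exact hgen (.inl (.inr ⟨i, rfl⟩))
    · exact hgen (.inr ⟨i, rfl⟩)
  · intro u hu
    induction hu using NonUnitalAlgebra.adjoin_induction with
    | mem u hu => rcases hu with (⟨i, rfl⟩ | ⟨i, rfl⟩) | ⟨i, rfl⟩ <;> simp
    | add u v _ _ hu hv => exact add_mem hu hv
    | zero => exact zero_mem _
    | mul u v hu _ _ hv => exact mul_mem_paths_of_mem_adjoin hu hv
    | smul r u _ hu => exact smul_mem _ r hu

theorem generators_eq_image : generators F = mk '' Set.range (ι F) := by
  ext x
  simp only [generators, Set.mem_union, Set.mem_range, Set.mem_image, exists_exists_eq_and]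
  constructor
  · rintro ((⟨i, rfl⟩ | ⟨i, rfl⟩) | ⟨i, rfl⟩)
    exacts [⟨.e i, rfl⟩, ⟨.a i, rfl⟩, ⟨.b i, rfl⟩]
  · rintro ⟨g | g | g, rfl⟩
    exacts [.inl (.inl ⟨g, rfl⟩), .inl (.inr ⟨g, rfl⟩), .inr ⟨g, rfl⟩]

theorem adjoin_generators_eq_top : Algebra.adjoin F (generators F) = ⊤ := by
  rw [generators_eq_image, Algebra.adjoin_image, adjoin_range_ι, Algebra.map_top,
    AlgHom.range_eq_top]
  exact mk_surjective

theorem mem_span_one_sup_paths (x : KOneInf F) : x ∈ span F {1} ⊔ paths F := by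
  rw [paths_eq_adjoin, ← Algebra.adjoin_toSubmodule_eq_span_one_sup, adjoin_generators_eq_top]
  exact Algebra.mem_top (R := F)

theorem Ke_mul_mul_Ke_eq_zero_of_mem_paths {i j : ℤ} (hij : 2 ≤ |i - j|) {x : KOneInf F}
    (hx : x ∈ paths F) : Ke F j * x * Ke F i = 0 := by
  induction hx using span_induction with
  | mem _ hx =>
    obtain ⟨p, rfl⟩ := hx
    rw [Ke_mul_path, ite_mul, path_mul_Ke, zero_mul]
    split_ifs with hj hi
    · have := abs_tgt_sub_src_le p
      rw [← hi, ← hj] at this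
      linarith
    all_goals rfl
  | zero => rw [mul_zero, zero_mul]
  | add x y _ _ hx hy => rw [mul_add, add_mul, hx, hy, add_zero]
  | smul r x _ hx => rw [mul_smul_comm, smul_mul_assoc, hx, smul_zero]

theorem Ke_mul_mul_Ke_eq_zero {i j : ℤ} (hij : 2 ≤ |i - j|) (x : KOneInf F) :
    Ke F j * x * Ke F i = 0 := by
  obtain ⟨y, hy, z, hz, rfl⟩ := mem_sup.mp (mem_span_one_sup_paths x)
  obtain ⟨r, rfl⟩ := mem_span_singleton.mp hy
  have hji : j ≠ i := by rintro rfl; simp at hij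
  rw [mul_add, add_mul, Ke_mul_mul_Ke_eq_zero_of_mem_paths hij hz, mul_smul_comm, mul_one,
    smul_mul_assoc, Ke_mul_Ke, if_neg hji, smul_zero, zero_add]

end Spanning

section Representation

/-- `leftQuot g q` is the basis path `p` with `g * p = q`, if any. It is unique, so left
multiplication by `g` acts on coefficient vectors by `f ↦ f ∘ leftQuot g`, read as `0` off its
domain. -/
def leftQuot : PathGen → ℤ × Fin 4 → Option (ℤ × Fin 4)
  | .e i, q => if src q = i then some q else none
  | .a i, (k, 1) => if k = i then some (i, 3) else none
  | .a i, (k, 2) => if k = i then some (i + 1, 0) else none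
  | .b i, (k, 1) => if k = i + 1 then some (i, 2) else none
  | .b i, (k, 3) => if k = i then some (i, 0) else none
  | _, _ => none

variable (F) in
noncomputable def genAction (g : PathGen) : Module.End F (ℤ × Fin 4 → F) where
  toFun f q := (leftQuot g q).elim 0 f
  map_add' f f' := by ext q; simp only [Pi.add_apply]; cases leftQuot g q <;> simp
  map_smul' r f := by ext q; simp only [Pi.smul_apply]; cases leftQuot g q <;> simp

theorem lift_genAction_eq_of_rel {x y : FreeAlgebra F PathGen} (h : PathRel F x y) :
    lift F (genAction F) x = lift F (genAction F) y := by
  induction h <;> (try split_ifs) <;> ext f ⟨k, t⟩ <;> fin_cases t <;>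
    simp only [map_mul, map_zero, lift_ι_apply, genAction, leftQuot, src, Module.End.mul_apply,
      LinearMap.coe_mk, AddHom.coe_mk, LinearMap.zero_apply, Pi.zero_apply,
      Option.elim_ite_some_none, Option.elim_none, Fin.isValue, Fin.zero_eta, Fin.mk_one,
      Fin.reduceFinMk] <;>
    grind

variable (F) in
noncomputable def coeffRep : KOneInf F →ₐ[F] Module.End F (ℤ × Fin 4 → F) :=
  RingQuot.liftAlgHom F ⟨lift F (genAction F), fun _ _ => lift_genAction_eq_of_rel⟩

theorem coeffRep_mk (x : FreeAlgebra F PathGen) : coeffRep F (mk x) = lift F (genAction F) x :=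
  RingQuot.liftAlgHom_mkAlgHom_apply F _ _ x

@[simp] theorem coeffRep_Ke (i : ℤ) : coeffRep F (Ke F i) = genAction F (.e i) := by
  rw [← mk_ι_e, coeffRep_mk, lift_ι_apply]

@[simp] theorem coeffRep_Ka (i : ℤ) : coeffRep F (Ka F i) = genAction F (.a i) := by
  rw [← mk_ι_a, coeffRep_mk, lift_ι_apply]

@[simp] theorem coeffRep_Kb (i : ℤ) : coeffRep F (Kb F i) = genAction F (.b i) := by
  rw [← mk_ι_b, coeffRep_mk, lift_ι_apply]

variable (F) in
/-- The coefficient vector of the formal unit `∑ e_i`: `coeffRep F x (formalOne F)` is the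
coefficient vector of `x`. -/
def formalOne : ℤ × Fin 4 → F := fun q => if q.2 = 0 then 1 else 0

theorem coeffRep_path_formalOne (p : ℤ × Fin 4) :
    coeffRep F (path F p) (formalOne F) = Pi.single p 1 := by
  obtain ⟨i, t⟩ := p
  ext ⟨k, s⟩
  fin_cases t <;> fin_cases s <;>
    simp [path, Kc, genAction, leftQuot, src, formalOne, Module.End.mul_apply,
      Option.elim_ite_some_none, Pi.single_apply]

theorem linearIndependent_path : LinearIndependent F (path F) := by
  refine .of_comp (LinearMap.applyₗ (formalOne F) ∘ₗ (coeffRep F).toLinearMap) ?_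
  convert Pi.linearIndependent_single_one (ℤ × Fin 4) F with p
  exact coeffRep_path_formalOne p

end Representation

end KOneInf

/-- In `K₁^∞`, the set `{e_i, c_i, a_i, b_i : i ∈ ℤ}` is an `F`-basis of the path
algebra (i.e. of the non-unital subalgebra generated by the lazy paths and arrows,
inside the unital hull); in particular `e_j K₁^∞ e_i = 0` whenever `|i - j| ≥ 2`. -/
theorem basis_of_KOneInf (F : Type*) [Field F] :
    LinearIndependent F (fun pr : ℤ × Fin 4 =>
      (![Ke F pr.1, Kc F pr.1, Ka F pr.1, Kb F pr.1] pr.2 : KOneInf F)) ∧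
    (Submodule.span F (Set.range (fun pr : ℤ × Fin 4 =>
        (![Ke F pr.1, Kc F pr.1, Ka F pr.1, Kb F pr.1] pr.2 : KOneInf F))) : Set (KOneInf F))
      = (NonUnitalAlgebra.adjoin F
          (Set.range (Ke F) ∪ Set.range (Ka F) ∪ Set.range (Kb F)) : Set (KOneInf F)) ∧
    (∀ (i j : ℤ) (x : KOneInf F), 2 ≤ |i - j| → Ke F j * x * Ke F i = 0) :=
  ⟨KOneInf.linearIndependent_path, congrArg SetLike.coe KOneInf.paths_eq_adjoin,
    fun _ _ x hij => KOneInf.Ke_mul_mul_Ke_eq_zero hij x⟩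
end

section
/- Define the crystal graph on the set Λ of diagrammatic weights with directed edges μ →ᵢ λ of colour i ∈ ℤ whenever λ is obtained from μ by changing the labels at vertices i and i+1 according to one of the six local moves: ∨∘ → ∘∨, ∧∘ → ∘∧, ×∨ → ∨×, ×∧ → ∧×, ×∘ → ∨∧, ∨∧ → ∘× (all other vertices unchanged). For every λ ∈ Λ_{p,q}^∘, there is a directed path in the crystal graph from λ_{p,q} to λ of length ht(λ) - ht(λ_{p,q}) with all edge colours in the interval I_{p,q} = {p-m+1, ..., q+n-1}. -/
/-- The four possible labels of a vertex of a diagrammatic weight. -/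
inductive Label : Type
  | circ   -- ∘
  | wedge  -- ∧
  | vee    -- ∨
  | times  -- ×
  deriving DecidableEq

/-- The set `Λ(m|n)` of diagrammatic weights: labelings of `ℤ` in which a total of `m`
vertices are labelled `×` or `∨`, a total of `n` vertices are labelled `∘` or `∨`,
and all remaining (cofinitely many) vertices are labelled `∧`. -/
def LamSet (m n : ℕ) : Set (ℤ → Label) :=
  {f | {i : ℤ | f i = Label.times ∨ f i = Label.vee}.Finite ∧
       {i : ℤ | f i = Label.times ∨ f i = Label.vee}.ncard = m ∧
       {i : ℤ | f i = Label.circ ∨ f i = Label.vee}.Finite ∧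
       {i : ℤ | f i = Label.circ ∨ f i = Label.vee}.ncard = n}

/-- The height of a diagrammatic weight:
`ht(λ) = Σ_{i : λ(i) = ×} i − Σ_{i : λ(i) = ∘} i`. -/
noncomputable def ht (f : ℤ → Label) : ℤ :=
  (∑ᶠ i ∈ {i : ℤ | f i = Label.times}, i) - (∑ᶠ i ∈ {i : ℤ | f i = Label.circ}, i)

/-- The crystal graph edge relation `μ →ᵢ λ` of colour `i`: `λ` is obtained from `μ` by
changing the labels at vertices `i` and `i+1` according to one of the six local moves
`∨∘ → ∘∨`, `∧∘ → ∘∧`, `×∨ → ∨×`, `×∧ → ∧×`, `×∘ → ∨∧`, `∨∧ → ∘×`,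
all other vertices being unchanged. -/
def CrystalEdge (i : ℤ) (mu lam : ℤ → Label) : Prop :=
  (∀ j : ℤ, j ≠ i → j ≠ i + 1 → lam j = mu j) ∧
  ((mu i = Label.vee ∧ mu (i+1) = Label.circ ∧ lam i = Label.circ ∧ lam (i+1) = Label.vee) ∨
   (mu i = Label.wedge ∧ mu (i+1) = Label.circ ∧ lam i = Label.circ ∧ lam (i+1) = Label.wedge) ∨
   (mu i = Label.times ∧ mu (i+1) = Label.vee ∧ lam i = Label.vee ∧ lam (i+1) = Label.times) ∨
   (mu i = Label.times ∧ mu (i+1) = Label.wedge ∧ lam i = Label.wedge ∧ lam (i+1) = Label.times) ∨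
   (mu i = Label.times ∧ mu (i+1) = Label.circ ∧ lam i = Label.vee ∧ lam (i+1) = Label.wedge) ∨
   (mu i = Label.vee ∧ mu (i+1) = Label.wedge ∧ lam i = Label.circ ∧ lam (i+1) = Label.times))

/-- The ground-state weight `λ_{p,q}`: `×` on vertices `p-m+1, …, p`, `∘` on vertices
`q+1, …, q+n`, and `∧` elsewhere. -/
def lamPQ (m n : ℕ) (p q : ℤ) : ℤ → Label := fun i =>
  if p - m + 1 ≤ i ∧ i ≤ p then Label.times
  else if q + 1 ≤ i ∧ i ≤ q + n then Label.circ
  else Label.wedge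

/-- The strip condition defining `Λ_{p,q}`: the label is `∧` at every vertex outside the
interval `I_{p,q}⁺ = {p-m+1, …, q+n}`. -/
def InStrip (m n : ℕ) (p q : ℤ) : Set (ℤ → Label) :=
  {f | ∀ i : ℤ, (i < p - m + 1 ∨ q + n < i) → f i = Label.wedge}

/-- The balance condition defining `Λ_{p,q}^∘` inside `Λ_{p,q}`: for every
`j ∈ I_{p,q}⁺`, among the vertices `j, …, q+n` the number of `∧`'s is at least the
number of `∨`'s. -/
def BalancedWt (m n : ℕ) (p q : ℤ) (f : ℤ → Label) : Prop :=
  ∀ j : ℤ, p - m + 1 ≤ j → j ≤ q + n →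
    {i : ℤ | j ≤ i ∧ i ≤ q + n ∧ f i = Label.vee}.ncard ≤
    {i : ℤ | j ≤ i ∧ i ≤ q + n ∧ f i = Label.wedge}.ncard


/-!
Descent to the ground state. Every local move raises the height by one and preserves the
number of `×`/`∨` and of `∘`/`∨` labels in each pair, as well as the `∧`-minus-`∨` surplus;
so reversing a move at a position `i` inside the strip keeps a weight in `Λ_{p,q}^∘` as soon as
the suffix starting at `i + 1` stays balanced, which is automatic unless the reversed move
creates a `∨` there. If a balanced weight admits no such reverse move, a rightmost `∨` would
violate balance, so there is no `∨`; then `×` labels can only be preceded by `×` and `∘` labels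
only followed by `∘`, which forces the weight to be `λ_{p,q}`. Since heights on the strip are
bounded below, descending from `λ` reaches `λ_{p,q}` after exactly `ht λ - ht λ_{p,q}` steps.
-/

open Finset

theorem exists_relSeries_of_exists_pred {α : Type*} {r : SetRel α α} {S : Set α} {h : α → ℤ}
    {x₀ : α} (hbdd : BddBelow (h '' S))
    (hpred : ∀ x ∈ S, x ≠ x₀ → ∃ y ∈ S, (y, x) ∈ r ∧ h y + 1 = h x) {x : α} (hx : x ∈ S) :
    ∃ s : RelSeries r, s.head = x₀ ∧ s.last = x ∧ h x = h x₀ + s.length := by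
  obtain ⟨B, hB⟩ := hbdd
  induction hk : (h x - B).toNat using Nat.strong_induction_on generalizing x with
  | _ k ih =>
    by_cases hx₀ : x = x₀
    · exact ⟨RelSeries.singleton r x, hx₀ ▸ rfl, rfl, by simp [hx₀]⟩
    obtain ⟨y, hy, hyx, hhy⟩ := hpred x hx hx₀
    have hBy := hB ⟨y, hy, rfl⟩
    obtain ⟨s, hhead, hlast, hlen⟩ := ih _ (by omega) hy rfl
    exact ⟨s.snoc x (hlast ▸ hyx), by simp [hhead], by simp, by simp; omega⟩

namespace Label

def LocalMove (x y x' y' : Label) : Prop :=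
  (x = vee ∧ y = circ ∧ x' = circ ∧ y' = vee) ∨
  (x = wedge ∧ y = circ ∧ x' = circ ∧ y' = wedge) ∨
  (x = times ∧ y = vee ∧ x' = vee ∧ y' = times) ∨
  (x = times ∧ y = wedge ∧ x' = wedge ∧ y' = times) ∨
  (x = times ∧ y = circ ∧ x' = vee ∧ y' = wedge) ∨
  (x = vee ∧ y = wedge ∧ x' = circ ∧ y' = times)

def mCount (ℓ : Label) : ℤ := if ℓ = times ∨ ℓ = vee then 1 else 0

def nCount (ℓ : Label) : ℤ := if ℓ = circ ∨ ℓ = vee then 1 else 0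

def surplus (ℓ : Label) : ℤ := (if ℓ = wedge then 1 else 0) - if ℓ = vee then 1 else 0

def heightAt (ℓ : Label) (x : ℤ) : ℤ := (if ℓ = times then x else 0) - if ℓ = circ then x else 0

variable {x y x' y' : Label}

/-- Each local move either swaps its two labels or trades `{×, ∘}` for `{∨, ∧}`. -/
theorem LocalMove.add_eq {F : Label → ℤ} (hF : F times + F circ = F vee + F wedge)
    (h : LocalMove x y x' y') : F x + F y = F x' + F y' := by
  rcases h with h | h | h | h | h | h <;> simp only [h] <;> linarith

theorem LocalMove.heightAt_add_one (h : LocalMove x y x' y') (i : ℤ) :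
    x.heightAt i + y.heightAt (i + 1) + 1 = x'.heightAt i + y'.heightAt (i + 1) := by
  rcases h with h | h | h | h | h | h <;> simp [h, heightAt]

theorem neg_abs_le_heightAt (ℓ : Label) (i : ℤ) : -|i| ≤ ℓ.heightAt i := by
  cases ℓ <;> simp [heightAt, neg_abs_le, le_abs_self]

end Label

open Label

theorem sum_Icc_sub_sum_Icc_of_eq_off_pair {G H : ℤ → ℤ} {i j N : ℤ}
    (hGH : ∀ x, x ≠ i → x ≠ i + 1 → G x = H x) (hj : j ≤ i) (hN : i + 1 ≤ N) :
    ∑ x ∈ Icc j N, G x - ∑ x ∈ Icc j N, H x = G i + G (i + 1) - (H i + H (i + 1)) := by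
  have hsub : {i, i + 1} ⊆ Icc j N := by
    intro x hx
    simp only [mem_insert, mem_singleton] at hx
    rw [mem_Icc]
    omega
  rw [← sum_sub_distrib, ← sum_subset hsub fun x _ hx => ?_, sum_pair (by omega)]
  · ring
  · simp only [mem_insert, mem_singleton, not_or] at hx
    rw [hGH x hx.1 hx.2, sub_self]

namespace CrystalEdge

variable {i j N : ℤ} {mu lam : ℤ → Label}

theorem localMove (h : CrystalEdge i mu lam) :
    LocalMove (mu i) (mu (i + 1)) (lam i) (lam (i + 1)) :=
  h.2

theorem sum_Icc_eq {F : Label → ℤ} (hF : F times + F circ = F vee + F wedge)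
    (h : CrystalEdge i mu lam) (hj : j ≤ i) (hN : i + 1 ≤ N) :
    ∑ x ∈ Icc j N, F (mu x) = ∑ x ∈ Icc j N, F (lam x) := by
  have hdiff := sum_Icc_sub_sum_Icc_of_eq_off_pair (G := fun x => F (lam x))
    (H := fun x => F (mu x)) (fun x hi hi' => by rw [h.1 x hi hi']) hj hN
  have := h.localMove.add_eq hF
  linarith

theorem sum_Icc_heightAt_add_one (h : CrystalEdge i mu lam) (hj : j ≤ i) (hN : i + 1 ≤ N) :
    ∑ x ∈ Icc j N, (mu x).heightAt x + 1 = ∑ x ∈ Icc j N, (lam x).heightAt x := by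
  have hdiff := sum_Icc_sub_sum_Icc_of_eq_off_pair (G := fun x => (lam x).heightAt x)
    (H := fun x => (mu x).heightAt x) (fun x hi hi' => by rw [h.1 x hi hi']) hj hN
  have := h.localMove.heightAt_add_one i
  linarith

end CrystalEdge

section Strip

variable {m n : ℕ} {p q : ℤ} {f : ℤ → Label}

theorem InStrip.mem_Icc (hf : f ∈ InStrip m n p q) {x : ℤ} (hx : f x ≠ wedge) :
    x ∈ Icc (p - m + 1) (q + n) := by
  by_contra hout
  rw [Finset.mem_Icc, not_and_or, not_le, not_le] at hout
  exact hx (hf x hout)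

theorem InStrip.setOf_eq_coe_filter (hf : f ∈ InStrip m n p q) {P : Label → Prop}
    [DecidablePred P] (hP : ¬P wedge) :
    {x | P (f x)} = ↑({x ∈ Icc (p - m + 1) (q + n) | P (f x)}) := by
  ext x
  simp only [Set.mem_ofPred_eq, coe_filter, iff_and_self]
  exact fun hx => InStrip.mem_Icc hf fun hw => hP (hw ▸ hx)

theorem InStrip.ht_eq_sum (hf : f ∈ InStrip m n p q) :
    ht f = ∑ x ∈ Icc (p - m + 1) (q + n), (f x).heightAt x := by
  rw [ht, InStrip.setOf_eq_coe_filter hf (P := (· = times)) (by simp),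
    InStrip.setOf_eq_coe_filter hf (P := (· = circ)) (by simp), finsum_mem_coe_finset,
    finsum_mem_coe_finset, sum_filter, sum_filter, ← sum_sub_distrib]
  rfl

theorem InStrip.neg_sum_abs_le_ht (hf : f ∈ InStrip m n p q) :
    -∑ x ∈ Icc (p - m + 1) (q + n), |x| ≤ ht f := by
  rw [InStrip.ht_eq_sum hf, ← sum_neg_distrib]
  exact sum_le_sum fun x _ => neg_abs_le_heightAt (f x) x

theorem CrystalEdge.inStrip {i : ℤ} {mu lam : ℤ → Label} (h : CrystalEdge i mu lam)
    (hlam : lam ∈ InStrip m n p q) (hi : p - m + 1 ≤ i) (hi' : i + 1 ≤ q + n) :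
    mu ∈ InStrip m n p q := fun x hx => by
  rw [← h.1 x (by omega) (by omega)]
  exact hlam x hx

theorem mem_lamSet_iff (hf : f ∈ InStrip m n p q) :
    f ∈ LamSet m n ↔ ∑ x ∈ Icc (p - m + 1) (q + n), (f x).mCount = m ∧
      ∑ x ∈ Icc (p - m + 1) (q + n), (f x).nCount = n := by
  simp only [LamSet, Set.mem_ofPred_eq,
    InStrip.setOf_eq_coe_filter hf (P := fun ℓ => ℓ = times ∨ ℓ = vee) (by simp),
    InStrip.setOf_eq_coe_filter hf (P := fun ℓ => ℓ = circ ∨ ℓ = vee) (by simp),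
    finite_toSet, Set.ncard_coe_finset, true_and, mCount, nCount, ← natCast_card_filter,
    Nat.cast_inj]

end Strip

noncomputable def suffixSurplus (N : ℤ) (f : ℤ → Label) (j : ℤ) : ℤ :=
  ∑ x ∈ Icc j N, (f x).surplus

section SuffixSurplus

variable {N j : ℤ} {f g : ℤ → Label}

theorem suffixSurplus_eq_zero_of_lt (h : N < j) : suffixSurplus N f j = 0 := by
  rw [suffixSurplus, Icc_eq_empty_of_lt h, sum_empty]

theorem suffixSurplus_eq_add (h : j ≤ N) :
    suffixSurplus N f j = (f j).surplus + suffixSurplus N f (j + 1) := by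
  rw [suffixSurplus, suffixSurplus, ← insert_Icc_add_one_left_eq_Icc h, sum_insert (by simp)]

theorem suffixSurplus_congr (h : ∀ x, j ≤ x → x ≤ N → f x = g x) :
    suffixSurplus N f j = suffixSurplus N g j :=
  sum_congr rfl fun x hx => by rw [h x (mem_Icc.1 hx).1 (mem_Icc.1 hx).2]

theorem balancedWt_iff {m n : ℕ} {p q : ℤ} :
    BalancedWt m n p q f ↔ ∀ j, p - m + 1 ≤ j → j ≤ q + n → 0 ≤ suffixSurplus (q + n) f j := by
  have hset : ∀ (ℓ : Label) (j : ℤ),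
      {i | j ≤ i ∧ i ≤ q + n ∧ f i = ℓ} = ↑({i ∈ Icc j (q + n) | f i = ℓ}) := by
    intro ℓ j
    ext i
    simp [and_assoc]
  simp only [BalancedWt, hset, Set.ncard_coe_finset, suffixSurplus, surplus, sum_sub_distrib,
    ← natCast_card_filter, sub_nonneg, Nat.cast_le]

theorem BalancedWt.suffixSurplus_nonneg {m n : ℕ} {p q : ℤ} (hf : BalancedWt m n p q f)
    (hj : p - m + 1 ≤ j) (hj' : j ≤ q + n + 1) : 0 ≤ suffixSurplus (q + n) f j := by
  rcases lt_or_eq_of_le hj' with hj' | rfl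
  · exact balancedWt_iff.1 hf j hj (by omega)
  · rw [suffixSurplus_eq_zero_of_lt (by omega)]

end SuffixSurplus

def LamCirc (m n : ℕ) (p q : ℤ) : Set (ℤ → Label) :=
  {f | f ∈ LamSet m n ∧ f ∈ InStrip m n p q ∧ BalancedWt m n p q f}

def crystalEdgesIcc (lo hi : ℤ) : SetRel (ℤ → Label) (ℤ → Label) :=
  {e | ∃ c, (lo ≤ c ∧ c ≤ hi) ∧ CrystalEdge c e.1 e.2}

section LamCirc

variable {m n : ℕ} {p q i : ℤ} {mu lam : ℤ → Label}

theorem CrystalEdge.mem_lamCirc (h : CrystalEdge i mu lam) (hlam : lam ∈ LamCirc m n p q)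
    (hi : p - m + 1 ≤ i) (hi' : i + 1 ≤ q + n)
    (hbal : 0 ≤ suffixSurplus (q + n) mu (i + 1)) : mu ∈ LamCirc m n p q := by
  obtain ⟨hls, hstrip, hbal'⟩ := hlam
  have hmu := h.inStrip hstrip hi hi'
  refine ⟨?_, hmu, balancedWt_iff.2 fun j hj hj' => ?_⟩
  · rw [mem_lamSet_iff hmu, h.sum_Icc_eq (by simp [mCount]) hi hi',
      h.sum_Icc_eq (by simp [nCount]) hi hi']
    exact (mem_lamSet_iff hstrip).1 hls
  · rcases lt_trichotomy j (i + 1) with hji | rfl | hji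
    · rw [suffixSurplus, h.sum_Icc_eq (by simp [surplus]) (by omega) hi']
      exact balancedWt_iff.1 hbal' j hj hj'
    · exact hbal
    · rw [suffixSurplus_congr fun x hx _ => (h.1 x (by omega) (by omega)).symm]
      exact balancedWt_iff.1 hbal' j hj hj'

theorem exists_pred_of_localMove (hlam : lam ∈ LamCirc m n p q) (hi : p - m + 1 ≤ i)
    (hi' : i < q + n) {u v : Label} (hmove : LocalMove u v (lam i) (lam (i + 1)))
    (hv : 0 ≤ v.surplus + suffixSurplus (q + n) lam (i + 2)) :
    ∃ mu ∈ LamCirc m n p q, (mu, lam) ∈ crystalEdgesIcc (p - m + 1) (q + n - 1) ∧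
      ht mu + 1 = ht lam := by
  set mu := Function.update (Function.update lam i u) (i + 1) v
  have hedge : CrystalEdge i mu lam :=
    ⟨fun j hj hj' => by simp [mu, hj, hj'], show LocalMove (mu i) (mu (i + 1)) _ _ by simpa [mu]⟩
  have hbal : 0 ≤ suffixSurplus (q + n) mu (i + 1) := by
    rw [suffixSurplus_eq_add (by omega), add_assoc, one_add_one_eq_two,
      suffixSurplus_congr fun x hx _ => (hedge.1 x (by omega) (by omega)).symm]
    simpa [mu] using hv
  have hmu := hedge.inStrip hlam.2.1 hi (by omega)
  refine ⟨mu, hedge.mem_lamCirc hlam hi (by omega) hbal, ⟨i, ⟨hi, by omega⟩, hedge⟩, ?_⟩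
  rw [InStrip.ht_eq_sum hmu, InStrip.ht_eq_sum hlam.2.1]
  exact hedge.sum_Icc_heightAt_add_one hi (by omega)

end LamCirc

theorem finset_eq_Icc_of_Icc_left_subset {s : Finset ℤ} {a : ℤ}
    (hs : ∀ x ∈ s, a ≤ x ∧ Icc a x ⊆ s) : s = Icc a (a + #s - 1) := by
  refine eq_of_subset_of_card_le (fun x hx => ?_) (by simp [Int.card_Icc])
  have hcard := card_le_card (hs x hx).2
  rw [Int.card_Icc] at hcard
  rw [mem_Icc]
  have := (hs x hx).1
  omega

theorem finset_eq_Icc_of_Icc_right_subset {s : Finset ℤ} {b : ℤ}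
    (hs : ∀ x ∈ s, x ≤ b ∧ Icc x b ⊆ s) : s = Icc (b - #s + 1) b := by
  refine eq_of_subset_of_card_le (fun x hx => ?_) (by simp [Int.card_Icc])
  have hcard := card_le_card (hs x hx).2
  rw [Int.card_Icc] at hcard
  rw [mem_Icc]
  have := (hs x hx).1
  omega

section Ground

variable {a b : ℤ} {f : ℤ → Label}

theorem eq_circ_of_le (hC : ∀ i, a ≤ i → i < b → f i = circ → f (i + 1) = circ) {i : ℤ}
    (hi : a ≤ i) (h : f i = circ) {x : ℤ} (hix : i ≤ x) (hxb : x ≤ b) : f x = circ := by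
  induction x, hix using Int.leInduction with
  | base => exact h
  | succ x hix ih => exact hC x (by omega) (by omega) (ih (by omega))

theorem eq_times_of_le (hX : ∀ i, a ≤ i → i < b → f (i + 1) = times → f i = times) {i : ℤ}
    (hib : i ≤ b) (h : f i = times) {x : ℤ} (hax : a ≤ x) (hxi : x ≤ i) : f x = times := by
  induction x, hxi using Int.leInductionDown with
  | base => exact h
  | pred x hxi ih => exact hX (x - 1) hax (by omega) (by simpa using ih (by omega))

variable {m n : ℕ} {p q : ℤ}

theorem forall_ne_vee (hf : f ∈ InStrip m n p q) (hbal : BalancedWt m n p q f)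
    (hC : ∀ i, p - m + 1 ≤ i → i < q + n → f i = circ → f (i + 1) = circ)
    (hV : ∀ i, p - m + 1 ≤ i → i < q + n → f i = vee →
      f (i + 1) ≠ wedge ∧ (f (i + 1) = times → suffixSurplus (q + n) f (i + 2) ≤ 0)) :
    ∀ x, f x ≠ vee := by
  by_contra! ⟨x, hx⟩
  obtain ⟨r, hr, hmax⟩ := Int.exists_greatest_of_bdd (P := (f · = vee))
    ⟨q + n, fun z hz => (mem_Icc.1 (InStrip.mem_Icc hf (by rw [hz]; simp))).2⟩ ⟨x, hx⟩
  obtain ⟨har, hrb⟩ := mem_Icc.1 (InStrip.mem_Icc hf (by rw [hr]; simp))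
  have hSr := hbal.suffixSurplus_nonneg har (by omega)
  rw [suffixSurplus_eq_add hrb, hr] at hSr
  simp only [surplus, reduceCtorEq, if_false, if_true] at hSr
  rcases lt_or_eq_of_le hrb with hrb | rfl
  swap
  · rw [suffixSurplus_eq_zero_of_lt (by omega)] at hSr
    omega
  have hS1 : suffixSurplus (q + n) f (r + 1) ≤ 0 := by
    rw [suffixSurplus_eq_add (by omega)]
    cases h : f (r + 1)
    · rw [suffixSurplus, sum_eq_zero fun y hy => by
        rw [eq_circ_of_le hC (by omega) h (by simp at hy; omega) (mem_Icc.1 hy).2]; rfl]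
      simp [surplus]
    · exact absurd h (hV r har hrb hr).1
    · exact absurd (hmax _ h) (by omega)
    · simpa [surplus, add_assoc, one_add_one_eq_two] using (hV r har hrb hr).2 h
  omega

theorem filter_times_eq_Icc
    (hX : ∀ i, p - m + 1 ≤ i → i < q + n → f (i + 1) = times → f i = times)
    (hcard : #{x ∈ Icc (p - m + 1) (q + n) | f x = times} = m) :
    {x ∈ Icc (p - m + 1) (q + n) | f x = times} = Icc (p - m + 1) p := by
  refine (finset_eq_Icc_of_Icc_left_subset (a := p - m + 1) fun x hx => ?_).trans ?_
  · simp only [mem_filter, mem_Icc] at hx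
    refine ⟨hx.1.1, fun y hy => ?_⟩
    simp only [mem_filter, mem_Icc] at hy ⊢
    exact ⟨by omega, eq_times_of_le hX hx.1.2 hx.2 hy.1 hy.2⟩
  · rw [hcard]
    congr 1
    ring

theorem filter_circ_eq_Icc
    (hC : ∀ i, p - m + 1 ≤ i → i < q + n → f i = circ → f (i + 1) = circ)
    (hcard : #{x ∈ Icc (p - m + 1) (q + n) | f x = circ} = n) :
    {x ∈ Icc (p - m + 1) (q + n) | f x = circ} = Icc (q + 1) (q + n) := by
  refine (finset_eq_Icc_of_Icc_right_subset (b := q + n) fun x hx => ?_).trans ?_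
  · simp only [mem_filter, mem_Icc] at hx
    refine ⟨hx.1.2, fun y hy => ?_⟩
    simp only [mem_filter, mem_Icc] at hy ⊢
    exact ⟨by omega, eq_circ_of_le hC hx.1.1 hx.2 hy.1 hy.2⟩
  · rw [hcard]
    congr 1
    ring

theorem eq_lamPQ (hf : f ∈ InStrip m n p q) (hls : f ∈ LamSet m n) (hnv : ∀ x, f x ≠ vee)
    (hX : ∀ i, p - m + 1 ≤ i → i < q + n → f (i + 1) = times → f i = times)
    (hC : ∀ i, p - m + 1 ≤ i → i < q + n → f i = circ → f (i + 1) = circ) :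
    f = lamPQ m n p q := by
  have hset : ∀ ℓ, ℓ ≠ wedge →
      {x | f x = ℓ ∨ f x = vee} = ↑({x ∈ Icc (p - m + 1) (q + n) | f x = ℓ}) := by
    intro ℓ hℓ
    simp only [hnv, or_false]
    exact InStrip.setOf_eq_coe_filter hf (P := (· = ℓ)) (Ne.symm hℓ)
  have hcardX := hls.2.1
  have hcardC := hls.2.2.2
  rw [hset times (by simp), Set.ncard_coe_finset] at hcardX
  rw [hset circ (by simp), Set.ncard_coe_finset] at hcardC
  have hmem : ∀ ℓ, ℓ ≠ wedge → ∀ x, f x = ℓ ↔ x ∈ {x ∈ Icc (p - m + 1) (q + n) | f x = ℓ} :=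
    fun ℓ hℓ x => by
      rw [mem_filter, iff_and_self]
      exact fun h => InStrip.mem_Icc hf (h ▸ hℓ)
  have hX' := hmem times (by simp)
  have hC' := hmem circ (by simp)
  simp only [filter_times_eq_Icc hX hcardX, filter_circ_eq_Icc hC hcardC, mem_Icc] at hX' hC'
  funext x
  unfold lamPQ
  split_ifs with h₁ h₂
  · exact (hX' x).2 h₁
  · exact (hC' x).2 h₂
  · cases h : f x
    · exact absurd ((hC' x).1 h) h₂
    · rfl
    · exact absurd h (hnv x)
    · exact absurd ((hX' x).1 h) h₁

end Ground

theorem exists_pred_of_ne_lamPQ {m n : ℕ} {p q : ℤ} {lam : ℤ → Label}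
    (hlam : lam ∈ LamCirc m n p q) (hne : lam ≠ lamPQ m n p q) :
    ∃ mu ∈ LamCirc m n p q, (mu, lam) ∈ crystalEdgesIcc (p - m + 1) (q + n - 1) ∧
      ht mu + 1 = ht lam := by
  obtain ⟨hls, hstrip, hbal⟩ := hlam
  by_contra hno
  have hmove : ∀ i u v, p - m + 1 ≤ i → i < q + n → LocalMove u v (lam i) (lam (i + 1)) →
      0 ≤ v.surplus + suffixSurplus (q + n) lam (i + 2) → False :=
    fun i u v hi hi' hm hv => hno (exists_pred_of_localMove ⟨hls, hstrip, hbal⟩ hi hi' hm hv)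
  have hmove' : ∀ i u v, p - m + 1 ≤ i → i < q + n → LocalMove u v (lam i) (lam (i + 1)) →
      0 ≤ v.surplus → False := fun i u v hi hi' hm hv =>
    have := hbal.suffixSurplus_nonneg (j := i + 2) (by omega) (by omega)
    hmove i u v hi hi' hm (by linarith)
  have hC : ∀ i, p - m + 1 ≤ i → i < q + n → lam i = circ → lam (i + 1) = circ := by
    intro i hi hi' h
    cases h' : lam (i + 1)
    · rfl
    · exact (hmove' i wedge circ hi hi' (by simp [LocalMove, h, h']) (by simp [surplus])).elim
    · exact (hmove' i vee circ hi hi' (by simp [LocalMove, h, h']) (by simp [surplus])).elim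
    · exact (hmove' i vee wedge hi hi' (by simp [LocalMove, h, h']) (by simp [surplus])).elim
  have hV : ∀ i, p - m + 1 ≤ i → i < q + n → lam i = vee →
      lam (i + 1) ≠ wedge ∧ (lam (i + 1) = times → suffixSurplus (q + n) lam (i + 2) ≤ 0) := by
    intro i hi hi' h
    refine ⟨fun h' => hmove' i times circ hi hi' (by simp [LocalMove, h, h']) (by simp [surplus]),
      fun h' => ?_⟩
    by_contra! hpos
    exact hmove i times vee hi hi' (by simp [LocalMove, h, h']) (by simp [surplus]; omega)
  have hnv := forall_ne_vee hstrip hbal hC hV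
  have hX : ∀ i, p - m + 1 ≤ i → i < q + n → lam (i + 1) = times → lam i = times := by
    intro i hi hi' h
    cases h' : lam i
    · exact absurd (hC i hi hi' h') (by simp [h])
    · exact (hmove' i times wedge hi hi' (by simp [LocalMove, h, h']) (by simp [surplus])).elim
    · exact absurd h' (hnv i)
    · rfl
  exact hne (eq_lamPQ hstrip hls hnv hX hC)

theorem crystal_path_from_ground_state_general (m n : ℕ) (p q : ℤ)
    (lam : ℤ → Label) (h1 : lam ∈ LamSet m n) (h2 : lam ∈ InStrip m n p q)
    (h3 : BalancedWt m n p q lam) :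
    ∃ (seq : Fin ((ht lam - ht (lamPQ m n p q)).toNat + 1) → (ℤ → Label))
      (col : Fin ((ht lam - ht (lamPQ m n p q)).toNat) → ℤ),
      seq 0 = lamPQ m n p q ∧
      seq (Fin.last _) = lam ∧
      ∀ t : Fin ((ht lam - ht (lamPQ m n p q)).toNat),
        (p - m + 1 ≤ col t ∧ col t ≤ q + n - 1) ∧
        CrystalEdge (col t) (seq t.castSucc) (seq t.succ) := by
  have hbdd : BddBelow (ht '' LamCirc m n p q) :=
    ⟨_, Set.forall_mem_image.2 fun f hf => InStrip.neg_sum_abs_le_ht hf.2.1⟩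
  obtain ⟨s, hhead, hlast, hlen⟩ :=
    exists_relSeries_of_exists_pred hbdd (fun _ hx hne => exists_pred_of_ne_lamPQ hx hne)
      (show lam ∈ LamCirc m n p q from ⟨h1, h2, h3⟩)
  rw [show (ht lam - ht (lamPQ m n p q)).toNat = s.length by omega]
  choose col hcol using s.step
  exact ⟨s, col, hhead, hlast, hcol⟩

/-- For every `λ ∈ Λ_{p,q}^∘` there is a directed path in the crystal graph from the
ground-state weight `λ_{p,q}` to `λ` of length `ht(λ) - ht(λ_{p,q})`, all of whose edge
colours lie in the interval `I_{p,q} = {p-m+1, …, q+n-1}`. -/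
theorem crystal_path_from_ground_state (m n : ℕ) (p q : ℤ) (hpq : p ≤ q)
    (lam : ℤ → Label) (h1 : lam ∈ LamSet m n) (h2 : lam ∈ InStrip m n p q)
    (h3 : BalancedWt m n p q lam) :
    ∃ (seq : Fin ((ht lam - ht (lamPQ m n p q)).toNat + 1) → (ℤ → Label))
      (col : Fin ((ht lam - ht (lamPQ m n p q)).toNat) → ℤ),
      seq 0 = lamPQ m n p q ∧
      seq (Fin.last _) = lam ∧
      ∀ t : Fin ((ht lam - ht (lamPQ m n p q)).toNat),
        (p - m + 1 ≤ col t ∧ col t ≤ q + n - 1) ∧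
        CrystalEdge (col t) (seq t.castSucc) (seq t.succ) :=
  crystal_path_from_ground_state_general m n p q lam h1 h2 h3
end
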